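/- arXiv:2002.05571 — 5 statements merged into one kernel-verified Lean document; each statement's English description precedes it below -/
import Mathlib

section
/- Suppose K < x0 and T > 0. Let μ be a finite nonnegative Borel measure on ℝ with v_μ(θ,x) ≥ g(x) for all (θ,x) ∈ (0,T]×ℝ, and define s(μ) := μ|_{(-∞,K]} + μ((K,∞))·δ_K, where δ_K is the Dirac measure at K. Then s(μ) has the same total mass as μ, and s(μ) satisfies v_{s(μ)}(θ,x) ≥ v_μ(θ,x) ≥ g(x) for all (θ,x) ∈ (0,T]×(-∞,K); since g vanishes on [K,∞), s(μ) is again admissible for programme (P) with the same cost v_{s(μ)}(T,x0) = v_μ(T,x0). Consequently, in programme (P) it suffices to minimize over measures concentrated on (-∞,K]. -/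
open MeasureTheory Filter Set
open scoped ENNReal NNReal

/-- Gaussian density with mean `m` and variance `s2`. -/
noncomputable def gauss (m s2 y : ℝ) : ℝ :=
  (Real.sqrt (2 * Real.pi * s2))⁻¹ * Real.exp (-((y - m) ^ 2) / (2 * s2))

/-- The kernel `N(x + r̂θ, σ²θ, y) / N(x0 + r̂T, σ²T, y)` with `r̂ = r - σ²/2`. -/
noncomputable def kern (r σ x0 T θ x y : ℝ) : ℝ :=
  gauss (x + (r - σ ^ 2 / 2) * θ) (σ ^ 2 * θ) y /
    gauss (x0 + (r - σ ^ 2 / 2) * T) (σ ^ 2 * T) y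

/-- Generalised European value for `θ > 0`. -/
noncomputable def veuPos (r σ x0 T : ℝ) (μ : Measure ℝ) (θ x : ℝ) : ℝ≥0∞ :=
  ENNReal.ofReal (Real.exp (-(r * θ))) * ∫⁻ y, ENNReal.ofReal (kern r σ x0 T θ x y) ∂μ

/-- Generalised European value, extended to `θ = 0` by a lower limit. -/
noncomputable def veu (r σ x0 T : ℝ) (μ : Measure ℝ) (θ x : ℝ) : ℝ≥0∞ :=
  if θ = 0 then
    Filter.liminf (fun p : ℝ × ℝ => veuPos r σ x0 T μ p.1 p.2)
      (nhdsWithin ((0 : ℝ), x) {p : ℝ × ℝ | 0 < p.1})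
  else veuPos r σ x0 T μ θ x

/-- The standing assumptions on the American payoff
`g = 1_{(-∞,K]} φ`:  `φ` extends to an analytic function on a complex
domain containing `(-∞,K]`, is positive on `(-∞,K)`, vanishes at `K`,
satisfies a growth condition at `-∞` and the necessary concavity condition. -/
def GPayoff (r σ K : ℝ) (g : ℝ → ℝ) : Prop :=
  (∀ x, K < x → g x = 0) ∧ (∀ x, x < K → 0 < g x) ∧ g K = 0 ∧
  (∃ (U : Set ℂ) (φ : ℂ → ℂ), IsOpen U ∧ IsConnected U ∧
      (∀ x : ℝ, x ≤ K → (x : ℂ) ∈ U) ∧ AnalyticOnNhd ℂ φ U ∧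
      (∀ x : ℝ, x ≤ K → φ (x : ℂ) = ((g x : ℝ) : ℂ))) ∧
  Filter.Tendsto (fun x => Real.exp ((2 * r / σ ^ 2) * x) * g x) Filter.atBot (nhds 0) ∧
  (∀ x, x < K →
    deriv (deriv g) x - (2 * r / σ ^ 2) * (g x - deriv g x) - deriv g x ≤ 0)

/-- Admissibility for programme (P): the generalised European value dominates
the American payoff on `[0,T] × ℝ`. -/
def Admissible (r σ x0 T : ℝ) (g : ℝ → ℝ) (μ : Measure ℝ) : Prop :=
  ∀ θ ∈ Set.Icc (0 : ℝ) T, ∀ x : ℝ, ENNReal.ofReal (g x) ≤ veu r σ x0 T μ θ x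

/-!
For `x ≤ K ≤ x0` and `0 < θ ≤ T` the kernel `y ↦ N(x + r̂θ, σ²θ, y) / N(x0 + r̂T, σ²T, y)` is
nonincreasing on `[K, ∞)`: up to a positive factor it is the exponential of a quadratic in `y`,
whose increment from `y'` to `y ≥ y' ≥ K` is
`-(y - y') ((T - θ)(y + y' - 2K) + 2T(K - x) + 2θ(x0 - K)) / (2σ²θT) ≤ 0`.
Moving the mass of `μ` on `(K, ∞)` to `K` therefore can only increase `v_μ(θ, x)` for `x < K`,
while the total mass, hence the cost, is unchanged because the kernel is identically `1` at
`(T, x0)`. Where `x ≥ K` the payoff vanishes, and at `θ = 0` the inequality passes to the lower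
limit because `g` is continuous on `(-∞, K)`.
-/

open scoped Topology

namespace MeasureTheory.Measure

variable {α : Type*} [MeasurableSpace α] [LinearOrder α] [TopologicalSpace α]
  [OrderClosedTopology α] [OpensMeasurableSpace α]

noncomputable def relocate (μ : Measure α) (K : α) : Measure α :=
  μ.restrict (Iic K) + μ (Ioi K) • dirac K

theorem relocate_apply_univ (μ : Measure α) (K : α) : μ.relocate K univ = μ univ := by
  rw [relocate, add_apply, restrict_apply_univ, smul_apply, measure_univ, smul_eq_mul, mul_one,
    ← compl_Iic, measure_add_measure_compl measurableSet_Iic]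

theorem lintegral_le_lintegral_relocate [MeasurableSingletonClass α] (μ : Measure α) {K : α}
    {f : α → ℝ≥0∞} (hf : ∀ y ∈ Ioi K, f y ≤ f K) :
    ∫⁻ y, f y ∂μ ≤ ∫⁻ y, f y ∂μ.relocate K := by
  rw [relocate, lintegral_add_measure, lintegral_smul_measure, lintegral_dirac,
    ← lintegral_add_compl f measurableSet_Iic, compl_Iic]
  gcongr
  calc ∫⁻ y in Ioi K, f y ∂μ ≤ ∫⁻ _ in Ioi K, f K ∂μ := setLIntegral_mono measurable_const hf
    _ = μ (Ioi K) * f K := by rw [setLIntegral_const, mul_comm]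

end MeasureTheory.Measure

theorem gauss_pos (m : ℝ) {s2 : ℝ} (hs : 0 < s2) (y : ℝ) : 0 < gauss m s2 y := by
  have := Real.pi_pos
  unfold gauss
  positivity

theorem gauss_div_gauss_le {m₁ m₂ s₁ s₂ y y' : ℝ}
    (h : (y - m₂) ^ 2 / (2 * s₂) - (y - m₁) ^ 2 / (2 * s₁)
      ≤ (y' - m₂) ^ 2 / (2 * s₂) - (y' - m₁) ^ 2 / (2 * s₁)) :
    gauss m₁ s₁ y / gauss m₂ s₂ y ≤ gauss m₁ s₁ y' / gauss m₂ s₂ y' := by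
  unfold gauss
  rw [mul_div_mul_comm, mul_div_mul_comm, ← Real.exp_sub, ← Real.exp_sub]
  refine mul_le_mul_of_nonneg_left (Real.exp_le_exp.2 ?_) (by positivity)
  convert h using 1 <;> ring

theorem kern_antitoneOn (r : ℝ) {σ x0 T θ x K : ℝ} (hσ : 0 < σ) (hθ : 0 < θ) (hθT : θ ≤ T)
    (hx : x ≤ K) (hK : K ≤ x0) : AntitoneOn (kern r σ x0 T θ x) (Ici K) := by
  intro y' hy' y hy hyy'
  have hT : 0 < T := hθ.trans_le hθT
  refine gauss_div_gauss_le ?_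
  have hincr : ((y' - (x0 + (r - σ ^ 2 / 2) * T)) ^ 2 / (2 * (σ ^ 2 * T))
        - (y' - (x + (r - σ ^ 2 / 2) * θ)) ^ 2 / (2 * (σ ^ 2 * θ)))
      - ((y - (x0 + (r - σ ^ 2 / 2) * T)) ^ 2 / (2 * (σ ^ 2 * T))
        - (y - (x + (r - σ ^ 2 / 2) * θ)) ^ 2 / (2 * (σ ^ 2 * θ)))
      = (y - y') * ((T - θ) * ((y - K) + (y' - K)) + 2 * T * (K - x) + 2 * θ * (x0 - K))
        / (2 * σ ^ 2 * θ * T) := by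
    field_simp
    ring
  have hnonneg : 0 ≤ (y - y') * ((T - θ) * ((y - K) + (y' - K)) + 2 * T * (K - x)
      + 2 * θ * (x0 - K)) / (2 * σ ^ 2 * θ * T) := by
    have := sub_nonneg.2 hyy'
    have := sub_nonneg.2 hθT
    have := sub_nonneg.2 (mem_Ici.1 hy)
    have := sub_nonneg.2 (mem_Ici.1 hy')
    have := sub_nonneg.2 hx
    have := sub_nonneg.2 hK
    positivity
  linarith

theorem veu_of_ne_zero {r σ x0 T : ℝ} {μ : Measure ℝ} {θ : ℝ} (hθ : θ ≠ 0) (x : ℝ) :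
    veu r σ x0 T μ θ x = veuPos r σ x0 T μ θ x :=
  if_neg hθ

theorem veuPos_le_veuPos_relocate (r : ℝ) {σ x0 T θ x K : ℝ} (hσ : 0 < σ) (hθ : 0 < θ)
    (hθT : θ ≤ T) (hx : x ≤ K) (hK : K ≤ x0) (μ : Measure ℝ) :
    veuPos r σ x0 T μ θ x ≤ veuPos r σ x0 T (μ.relocate K) θ x := by
  unfold veuPos
  have hkern : ∀ y ∈ Ioi K,
      ENNReal.ofReal (kern r σ x0 T θ x y) ≤ ENNReal.ofReal (kern r σ x0 T θ x K) :=
    fun y hy => ENNReal.ofReal_le_ofReal <|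
      kern_antitoneOn r hσ hθ hθT hx hK self_mem_Ici (mem_Ici.2 hy.le) hy.le
  exact mul_le_mul_right (μ.lintegral_le_lintegral_relocate hkern) _

theorem veuPos_self (r : ℝ) {σ x0 T : ℝ} (hσ : 0 < σ) (hT : 0 < T) (μ : Measure ℝ) :
    veuPos r σ x0 T μ T x0 = ENNReal.ofReal (Real.exp (-(r * T))) * μ univ := by
  have hkern : ∀ y, kern r σ x0 T T x0 y = 1 := fun y =>
    div_self (gauss_pos _ (by positivity) y).ne'
  simp only [veuPos, hkern, ENNReal.ofReal_one, lintegral_one]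

theorem ofReal_le_veu_zero {r σ x0 T : ℝ} {μ : Measure ℝ} {f : ℝ → ℝ} {x : ℝ}
    (hf : ContinuousAt f x)
    (h : ∀ᶠ p : ℝ × ℝ in 𝓝[{p | 0 < p.1}] (0, x),
      ENNReal.ofReal (f p.2) ≤ veuPos r σ x0 T μ p.1 p.2) :
    ENNReal.ofReal (f x) ≤ veu r σ x0 T μ 0 x := by
  have hpath : Tendsto (fun t : ℝ => (t, x)) (𝓝[>] 0) (𝓝[{p | 0 < p.1}] (0, x)) :=
    tendsto_nhdsWithin_of_tendsto_nhds_of_eventually_within _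
      ((Continuous.prodMk_left x).tendsto' 0 _ rfl |>.mono_left nhdsWithin_le_nhds)
      self_mem_nhdsWithin
  have := hpath.neBot
  have hlim : Tendsto (fun p : ℝ × ℝ => ENNReal.ofReal (f p.2)) (𝓝[{p | 0 < p.1}] (0, x))
      (𝓝 (ENNReal.ofReal (f x))) :=
    (ENNReal.continuous_ofReal.tendsto _).comp
      (hf.tendsto.comp (continuousAt_snd.tendsto.mono_left nhdsWithin_le_nhds))
  rw [veu, if_pos rfl, ← hlim.liminf_eq]
  exact liminf_le_liminf h

namespace GPayoff

variable {r σ K : ℝ} {g : ℝ → ℝ}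

theorem eq_zero_of_le (hg : GPayoff r σ K g) {x : ℝ} (hx : K ≤ x) : g x = 0 := by
  rcases hx.eq_or_lt with rfl | hx
  exacts [hg.2.2.1, hg.1 x hx]

theorem continuousAt_of_lt (hg : GPayoff r σ K g) {x : ℝ} (hx : x < K) : ContinuousAt g x := by
  obtain ⟨-, -, -, ⟨U, φ, -, -, hmem, hφ, hφg⟩, -, -⟩ := hg
  have hre : ContinuousAt (fun t : ℝ => (φ t).re) x :=
    Complex.continuous_re.continuousAt.comp
      ((hφ _ (hmem x hx.le)).continuousAt.comp Complex.continuous_ofReal.continuousAt)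
  refine hre.congr ?_
  filter_upwards [Iio_mem_nhds hx] with t ht
  rw [hφg t (le_of_lt ht), Complex.ofReal_re]

end GPayoff

theorem relocated_measure_admissible_general
    (r σ T x0 K : ℝ) (hσ : 0 < σ) (hT : 0 < T) (hK : K < x0)
    (g : ℝ → ℝ) (hg : GPayoff r σ K g)
    (μ : Measure ℝ)
    (hadm : ∀ θ ∈ Set.Ioc (0 : ℝ) T, ∀ x : ℝ,
      ENNReal.ofReal (g x) ≤ veu r σ x0 T μ θ x) :
    (μ.restrict (Set.Iic K) + μ (Set.Ioi K) • Measure.dirac K) Set.univ = μ Set.univ ∧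
    (∀ θ ∈ Set.Ioc (0 : ℝ) T, ∀ x : ℝ, x < K →
      ENNReal.ofReal (g x) ≤ veu r σ x0 T μ θ x ∧
      veu r σ x0 T μ θ x ≤
        veu r σ x0 T (μ.restrict (Set.Iic K) + μ (Set.Ioi K) • Measure.dirac K) θ x) ∧
    Admissible r σ x0 T g (μ.restrict (Set.Iic K) + μ (Set.Ioi K) • Measure.dirac K) ∧
    veu r σ x0 T (μ.restrict (Set.Iic K) + μ (Set.Ioi K) • Measure.dirac K) T x0 =
      veu r σ x0 T μ T x0 := by
  rw [show μ.restrict (Iic K) + μ (Ioi K) • Measure.dirac K = μ.relocate K from rfl]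
  have hdom : ∀ θ ∈ Ioc (0 : ℝ) T, ∀ x < K,
      veu r σ x0 T μ θ x ≤ veu r σ x0 T (μ.relocate K) θ x := fun θ hθ x hx => by
    simpa only [veu_of_ne_zero hθ.1.ne'] using
      veuPos_le_veuPos_relocate r hσ hθ.1 hθ.2 hx.le hK.le μ
  have hpos : ∀ θ ∈ Ioc (0 : ℝ) T, ∀ x < K,
      ENNReal.ofReal (g x) ≤ veu r σ x0 T (μ.relocate K) θ x := fun θ hθ x hx =>
    (hadm θ hθ x).trans (hdom θ hθ x hx)
  refine ⟨μ.relocate_apply_univ K, fun θ hθ x hx => ⟨hadm θ hθ x, hdom θ hθ x hx⟩, ?_, ?_⟩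
  · rintro θ ⟨hθ0, hθT⟩ x
    rcases le_or_gt K x with hKx | hxK
    · simp [hg.eq_zero_of_le hKx]
    rcases hθ0.eq_or_lt with rfl | hθ0
    · refine ofReal_le_veu_zero (hg.continuousAt_of_lt hxK) ?_
      have hnear : ∀ᶠ p : ℝ × ℝ in 𝓝 (0, x), p.1 < T ∧ p.2 < K :=
        (continuousAt_fst.eventually_lt continuousAt_const hT).and
          (continuousAt_snd.eventually_lt continuousAt_const hxK)
      filter_upwards [self_mem_nhdsWithin, nhdsWithin_le_nhds hnear] with p hp₁ hp₂
      simpa only [veu_of_ne_zero hp₁.ne'] using hpos p.1 ⟨hp₁, hp₂.1.le⟩ p.2 hp₂.2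
    · exact hpos θ ⟨hθ0, hθT⟩ x hxK
  · rw [veu_of_ne_zero hT.ne', veu_of_ne_zero hT.ne', veuPos_self r hσ hT,
      veuPos_self r hσ hT, μ.relocate_apply_univ]

/-- Relocating the mass of an admissible measure `μ` from `(K,∞)`
to the point `K` preserves the total mass and the cost, dominates `v_μ` on
`(0,T] × (-∞,K)`, and yields again an admissible measure for programme (P). -/
theorem relocated_measure_admissible
    (r σ T x0 K : ℝ) (hr : 0 ≤ r) (hσ : 0 < σ) (hT : 0 < T) (hK : K < x0)
    (g : ℝ → ℝ) (hg : GPayoff r σ K g)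
    (μ : Measure ℝ) [IsFiniteMeasure μ]
    (hadm : ∀ θ ∈ Set.Ioc (0 : ℝ) T, ∀ x : ℝ,
      ENNReal.ofReal (g x) ≤ veu r σ x0 T μ θ x) :
    (μ.restrict (Set.Iic K) + μ (Set.Ioi K) • Measure.dirac K) Set.univ = μ Set.univ ∧
    (∀ θ ∈ Set.Ioc (0 : ℝ) T, ∀ x : ℝ, x < K →
      ENNReal.ofReal (g x) ≤ veu r σ x0 T μ θ x ∧
      veu r σ x0 T μ θ x ≤
        veu r σ x0 T (μ.restrict (Set.Iic K) + μ (Set.Ioi K) • Measure.dirac K) θ x) ∧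
    Admissible r σ x0 T g (μ.restrict (Set.Iic K) + μ (Set.Ioi K) • Measure.dirac K) ∧
    veu r σ x0 T (μ.restrict (Set.Iic K) + μ (Set.Ioi K) • Measure.dirac K) T x0 =
      veu r σ x0 T μ T x0 :=
  relocated_measure_admissible_general r σ T x0 K hσ hT hK g hg μ hadm
end

section
/- Let μ be a finite signed Borel measure on (-∞,K]. If the function Tμ(t,x) := ∫ κ(t,x,y) μ(dy) vanishes on some nonempty open subset of Ω := (0,T)×(-∞,K], then μ = 0. In particular, the operator μ ↦ Tμ is injective on finite signed Borel measures on (-∞,K]. -/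
open MeasureTheory Filter Set
open scoped ENNReal NNReal

/-- The kernel `κ(t,x,y) = N(x + r̃(T-t), σ²(T-t), y) / N(x0 + r̃T, σ²T, y)`
with `r̃ = -r - σ²/2`. -/
noncomputable def kappa (r σ x0 T t x y : ℝ) : ℝ :=
  gauss (x + (-r - σ ^ 2 / 2) * (T - t)) (σ ^ 2 * (T - t)) y /
    gauss (x0 + (-r - σ ^ 2 / 2) * T) (σ ^ 2 * T) y

/-- The operator `T` applied to a finite signed measure, via its
Jordan decomposition. -/
noncomputable def Tsigned (r σ x0 T : ℝ) (s : SignedMeasure ℝ) (t x : ℝ) : ℝ :=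
  (∫ y, kappa r σ x0 T t x y ∂s.toJordanDecomposition.posPart) -
    ∫ y, kappa r σ x0 T t x y ∂s.toJordanDecomposition.negPart

/-!
At a fixed time `t₀`, `κ(t₀, x, y)` is a positive constant times `exp (A y² + b y)`, where `A < 0`
and `b` is an affine function of `x` with nonzero slope. Vanishing of `Tμ` near a point of
`{t₀} × ℝ` therefore says that the finite measures `exp (A y²) μ⁺(dy)` and `exp (A y²) μ⁻(dy)`
have equal moment generating functions on an open set of `b`'s. The Gaussian factor makes both
mgfs finite, hence real-analytic, on all of `ℝ`, so they agree everywhere; such an mgf determines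
the measure (through its extension to the imaginary axis, the characteristic function), so
`μ⁺ = μ⁻` and `μ = μ⁺ - μ⁻ = 0`.
-/

open ProbabilityTheory

lemma interior_integrableExpSet_eq_univ {Ω : Type*} [MeasurableSpace Ω] {X : Ω → ℝ}
    {μ : Measure Ω} (hμ : ∀ t, Integrable (fun ω ↦ Real.exp (t * X ω)) μ) :
    interior (integrableExpSet X μ) = univ := by
  rw [interior_eq_univ, eq_univ_iff_forall]
  exact hμ

lemma mul_sq_add_mul_le {A : ℝ} (hA : A < 0) (b y : ℝ) :
    A * y ^ 2 + b * y ≤ b ^ 2 / (4 * -A) := by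
  rw [le_div_iff₀ (by linarith)]
  nlinarith [sq_nonneg (2 * A * y + b)]

lemma integrable_exp_mul_sq_add_mul {A : ℝ} (hA : A < 0) (b : ℝ) (μ : Measure ℝ)
    [IsFiniteMeasure μ] : Integrable (fun y ↦ Real.exp (A * y ^ 2 + b * y)) μ := by
  refine Integrable.mono' (integrable_const (Real.exp (b ^ 2 / (4 * -A))))
    (by fun_prop) (.of_forall fun y ↦ ?_)
  rw [Real.norm_of_nonneg (Real.exp_nonneg _)]
  exact Real.exp_le_exp.2 (mul_sq_add_mul_le hA b y)

lemma exists_gauss_div_gauss_eq_mul_exp {s₁ s₀ : ℝ} (h₁ : 0 < s₁) (h₀ : 0 < s₀) (m₁ m₀ : ℝ) :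
    ∃ c > 0, ∀ y, gauss m₁ s₁ y / gauss m₀ s₀ y =
      c * Real.exp (((2 * s₀)⁻¹ - (2 * s₁)⁻¹) * y ^ 2 + (m₁ / s₁ - m₀ / s₀) * y) := by
  refine ⟨Real.sqrt (2 * Real.pi * s₀) / Real.sqrt (2 * Real.pi * s₁) *
    Real.exp (m₀ ^ 2 / (2 * s₀) - m₁ ^ 2 / (2 * s₁)), by positivity, fun y ↦ ?_⟩
  have hexp : -(y - m₁) ^ 2 / (2 * s₁) = (m₀ ^ 2 / (2 * s₀) - m₁ ^ 2 / (2 * s₁)) +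
      (((2 * s₀)⁻¹ - (2 * s₁)⁻¹) * y ^ 2 + (m₁ / s₁ - m₀ / s₀) * y) +
      -(y - m₀) ^ 2 / (2 * s₀) := by
    field_simp
    ring
  have hsqrt₁ : 0 < Real.sqrt (2 * Real.pi * s₁) := by positivity
  have hsqrt₀ : 0 < Real.sqrt (2 * Real.pi * s₀) := by positivity
  rw [gauss, gauss, hexp, Real.exp_add, Real.exp_add]
  field_simp

namespace MeasureTheory.Measure

theorem ext_of_mgf_eqOn {μ ν : Measure ℝ} [IsFiniteMeasure μ] [IsFiniteMeasure ν]
    (hμ : ∀ t, Integrable (fun x ↦ Real.exp (t * x)) μ)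
    (hν : ∀ t, Integrable (fun x ↦ Real.exp (t * x)) ν)
    {U : Set ℝ} (hU : IsOpen U) (hU_ne : U.Nonempty) (h : EqOn (mgf id μ) (mgf id ν) U) :
    μ = ν := by
  obtain ⟨t₀, ht₀⟩ := hU_ne
  have hmgf : mgf id μ = mgf id ν := by
    refine AnalyticOnNhd.eq_of_eventuallyEq (𝕜 := ℝ) ?_ ?_ (eventually_of_mem (hU.mem_nhds ht₀) h)
    · simpa [interior_integrableExpSet_eq_univ (X := id) hμ]
        using analyticOnNhd_mgf (X := id) (μ := μ)
    · simpa [interior_integrableExpSet_eq_univ (X := id) hν]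
        using analyticOnNhd_mgf (X := id) (μ := ν)
  have hzero : μ = 0 ↔ ν = 0 := by
    have hmass := congrFun hmgf 0
    rw [mgf_zero', mgf_zero'] at hmass
    rw [← measure_univ_eq_zero, ← measure_univ_eq_zero,
      ← measureReal_eq_zero_iff, ← measureReal_eq_zero_iff, hmass]
  refine ext_of_complexMGF_id_eq (funext fun z ↦ eqOn_complexMGF_of_mgf' hmgf hzero ?_)
  simp [interior_integrableExpSet_eq_univ (X := id) hμ]

noncomputable def gaussTilt (A : ℝ) (μ : Measure ℝ) : Measure ℝ :=
  μ.withDensity fun y ↦ ENNReal.ofReal (Real.exp (A * y ^ 2))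

variable {A : ℝ} {μ ν : Measure ℝ}

lemma integral_gaussTilt (g : ℝ → ℝ) :
    ∫ y, g y ∂μ.gaussTilt A = ∫ y, Real.exp (A * y ^ 2) * g y ∂μ := by
  rw [gaussTilt, integral_withDensity_eq_integral_toReal_smul (by fun_prop)
    (.of_forall fun _ ↦ ENNReal.ofReal_lt_top)]
  simp [Real.exp_nonneg]

lemma integrable_gaussTilt_iff {g : ℝ → ℝ} :
    Integrable g (μ.gaussTilt A) ↔ Integrable (fun y ↦ Real.exp (A * y ^ 2) * g y) μ := by
  rw [gaussTilt, integrable_withDensity_iff_integrable_smul' (by fun_prop)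
    (.of_forall fun _ ↦ ENNReal.ofReal_lt_top)]
  simp [Real.exp_nonneg]

lemma isFiniteMeasure_gaussTilt (hA : A < 0) [IsFiniteMeasure μ] :
    IsFiniteMeasure (μ.gaussTilt A) :=
  isFiniteMeasure_withDensity_ofReal
    (by simpa using (integrable_exp_mul_sq_add_mul hA 0 μ).hasFiniteIntegral)

lemma integrable_exp_mul_gaussTilt (hA : A < 0) [IsFiniteMeasure μ] (t : ℝ) :
    Integrable (fun y ↦ Real.exp (t * y)) (μ.gaussTilt A) := by
  rw [integrable_gaussTilt_iff]
  simpa [← Real.exp_add] using integrable_exp_mul_sq_add_mul hA t μ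

lemma mgf_gaussTilt (t : ℝ) :
    mgf id (μ.gaussTilt A) t = ∫ y, Real.exp (A * y ^ 2 + t * y) ∂μ := by
  simp [mgf, integral_gaussTilt, ← Real.exp_add]

lemma gaussTilt_injective : Function.Injective (gaussTilt A) := by
  intro μ ν h
  have hinv : ∀ ρ : Measure ℝ,
      (ρ.gaussTilt A).withDensity (fun y ↦ (ENNReal.ofReal (Real.exp (A * y ^ 2)))⁻¹) = ρ :=
    fun ρ ↦ withDensity_inv_same (by fun_prop) (.of_forall fun _ ↦ by simp [Real.exp_pos])
      (.of_forall fun _ ↦ ENNReal.ofReal_ne_top)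
  rw [← hinv μ, ← hinv ν, h]

theorem ext_of_integral_exp_mul_sq_add_mul_eqOn (hA : A < 0) [IsFiniteMeasure μ]
    [IsFiniteMeasure ν] {U : Set ℝ} (hU : IsOpen U) (hU_ne : U.Nonempty)
    (h : ∀ b ∈ U, ∫ y, Real.exp (A * y ^ 2 + b * y) ∂μ = ∫ y, Real.exp (A * y ^ 2 + b * y) ∂ν) :
    μ = ν := by
  have := isFiniteMeasure_gaussTilt hA (μ := μ)
  have := isFiniteMeasure_gaussTilt hA (μ := ν)
  refine gaussTilt_injective (ext_of_mgf_eqOn (integrable_exp_mul_gaussTilt hA)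
    (integrable_exp_mul_gaussTilt hA) hU hU_ne fun b hb ↦ ?_)
  rw [mgf_gaussTilt, mgf_gaussTilt, h b hb]

end MeasureTheory.Measure

lemma exists_kappa_eq_mul_exp {r σ x0 T t : ℝ} (hσ : 0 < σ) (ht : 0 < t) (htT : t < T) :
    ∃ A < 0, ∃ x : ℝ → ℝ, Continuous x ∧ Function.Surjective x ∧
      ∀ b, ∃ c > 0, ∀ y, kappa r σ x0 T t (x b) y = c * Real.exp (A * y ^ 2 + b * y) := by
  have hs₁ : 0 < σ ^ 2 * (T - t) := by have := sub_pos.2 htT; positivity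
  have hs₀ : 0 < σ ^ 2 * T := by have := ht.trans htT; positivity
  refine ⟨(2 * (σ ^ 2 * T))⁻¹ - (2 * (σ ^ 2 * (T - t)))⁻¹, ?_,
    fun b ↦ σ ^ 2 * (T - t) * (b + (x0 + (-r - σ ^ 2 / 2) * T) / (σ ^ 2 * T)) -
      (-r - σ ^ 2 / 2) * (T - t), by fun_prop, fun x ↦ ⟨(x + (-r - σ ^ 2 / 2) * (T - t)) /
      (σ ^ 2 * (T - t)) - (x0 + (-r - σ ^ 2 / 2) * T) / (σ ^ 2 * T), ?_⟩, fun b ↦ ?_⟩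
  · exact sub_neg.2 (inv_strictAnti₀ (by positivity) (by nlinarith))
  · simp only [sub_add_cancel, mul_div_cancel₀ _ hs₁.ne', add_sub_cancel_right]
  · obtain ⟨c, hc, hκ⟩ := exists_gauss_div_gauss_eq_mul_exp hs₁ hs₀
      (σ ^ 2 * (T - t) * (b + (x0 + (-r - σ ^ 2 / 2) * T) / (σ ^ 2 * T)))
      (x0 + (-r - σ ^ 2 / 2) * T)
    refine ⟨c, hc, fun y ↦ ?_⟩
    rw [kappa, sub_add_cancel, hκ, mul_div_cancel_left₀ _ hs₁.ne', add_sub_cancel_right]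

theorem Tsigned_eq_zero_of_vanishing_on_open_general
    (r σ T x0 K : ℝ) (hσ : 0 < σ)
    (s : SignedMeasure ℝ)
    (V : Set (ℝ × ℝ)) (hVopen : IsOpen V) (hVne : V.Nonempty)
    (hVsub : V ⊆ Set.Ioo (0 : ℝ) T ×ˢ Set.Iic K)
    (hvanish : ∀ p ∈ V, Tsigned r σ x0 T s p.1 p.2 = 0) :
    s = 0 := by
  obtain ⟨⟨t₀, x₁⟩, hx₁⟩ := hVne
  obtain ⟨ht₀, ht₀T⟩ := (hVsub hx₁).1
  obtain ⟨A, hA, x, hx_cont, hx_surj, hκ⟩ :=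
    exists_kappa_eq_mul_exp (r := r) (x0 := x0) hσ ht₀ ht₀T
  have hU_ne : {b | (t₀, x b) ∈ V}.Nonempty := by
    obtain ⟨b₁, hb₁⟩ := hx_surj x₁
    exact ⟨b₁, by simpa [hb₁]⟩
  have hintegral_eq : ∀ b ∈ {b | (t₀, x b) ∈ V},
      ∫ y, Real.exp (A * y ^ 2 + b * y) ∂s.toJordanDecomposition.posPart =
        ∫ y, Real.exp (A * y ^ 2 + b * y) ∂s.toJordanDecomposition.negPart := by
    intro b hb
    obtain ⟨c, hc, hκb⟩ := hκ b
    have h := hvanish _ hb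
    simp only [Tsigned, hκb, integral_const_mul, sub_eq_zero] at h
    exact mul_left_cancel₀ hc.ne' h
  have hpn := Measure.ext_of_integral_exp_mul_sq_add_mul_eqOn hA
    (hVopen.preimage (f := fun b ↦ (t₀, x b)) (by fun_prop)) hU_ne hintegral_eq
  rw [← s.toSignedMeasure_toJordanDecomposition, JordanDecomposition.toSignedMeasure]
  simp [hpn]

/-- If the image under `T` of a finite signed Borel measure
concentrated on `(-∞,K]` vanishes on some nonempty open subset of
`Ω = (0,T) × (-∞,K]`, then the measure is zero; in particular `T` is injective. -/
theorem Tsigned_eq_zero_of_vanishing_on_open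
    (r σ T x0 K : ℝ) (hr : 0 ≤ r) (hσ : 0 < σ) (hT : 0 < T) (hK : K < x0)
    (s : SignedMeasure ℝ) (hconc : s.totalVariation (Set.Ioi K) = 0)
    (V : Set (ℝ × ℝ)) (hVopen : IsOpen V) (hVne : V.Nonempty)
    (hVsub : V ⊆ Set.Ioo (0 : ℝ) T ×ˢ Set.Iic K)
    (hvanish : ∀ p ∈ V, Tsigned r σ x0 T s p.1 p.2 = 0) :
    s = 0 :=
  Tsigned_eq_zero_of_vanishing_on_open_general r σ T x0 K hσ s V hVopen hVne hVsub hvanish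
end

section
/- Let V be a locally convex topological vector space over ℝ, let f : V → (-∞, ∞] be a convex function, and let x0 ∈ V. If there exists an open neighbourhood O of x0 such that sup_{x ∈ O} f(x) < ∞, then f is continuous at x0. -/
/-!
Where `f` is bounded above it is finite, so near `x0` it is a real convex function `g`. If
`g ≤ M` at `x0 ± u` and `0 ≤ t ≤ 1`, convexity on the segment from `x0` to `x0 + u` gives
`g (x0 + t • u) ≤ g x0 + t (M - g x0)`, and convexity at the midpoint `x0` of `x0 ± t • u` turns
the same bound at `x0 - t • u` into `g (x0 + t • u) ≥ g x0 - t (M - g x0)`. As `x0 + t • W` is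
a neighbourhood of `x0` for every neighbourhood `W` of `0`, letting `t → 0` gives continuity.
-/

open Filter Topology

lemma EReal.toReal_le_of_le_coe {x : EReal} {c : ℝ} (hx : x ≠ ⊥) (h : x ≤ c) : x.toReal ≤ c := by
  simpa using EReal.toReal_le_toReal h hx (EReal.coe_ne_top c)

theorem convexOn_toReal_of_ne_bot {V : Type*} [AddCommMonoid V] [Module ℝ V] {f : V → EReal}
    (hne : ∀ x, f x ≠ ⊥)
    (hconv : ∀ x y : V, ∀ a b : ℝ, 0 ≤ a → 0 ≤ b → a + b = 1 →
      f (a • x + b • y) ≤ (a : EReal) * f x + (b : EReal) * f y) :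
    ConvexOn ℝ {x | f x ≠ ⊤} (fun x => (f x).toReal) := by
  have hcomb : ∀ ⦃x⦄, f x ≠ ⊤ → ∀ ⦃y⦄, f y ≠ ⊤ → ∀ ⦃a b : ℝ⦄, 0 ≤ a → 0 ≤ b → a + b = 1 →
      f (a • x + b • y) ≤ ((a * (f x).toReal + b * (f y).toReal : ℝ) : EReal) := by
    intro x hx y hy a b ha hb hab
    have h := hconv x y a b ha hb hab
    rw [← EReal.coe_toReal hx (hne x), ← EReal.coe_toReal hy (hne y)] at h
    exact_mod_cast h
  refine ⟨fun x hx y hy a b ha hb hab => ?_, fun x hx y hy a b ha hb hab => ?_⟩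
  · exact ne_top_of_le_ne_top (EReal.coe_ne_top _) (hcomb hx hy ha hb hab)
  · exact EReal.toReal_le_of_le_coe (hne _) (hcomb hx hy ha hb hab)

section RealConvex

variable {V : Type*} [AddCommGroup V] [Module ℝ V] {S : Set V} {g : V → ℝ} {x0 u : V} {t M : ℝ}

theorem ConvexOn.le_add_smul_mul_sub (hg : ConvexOn ℝ S g) (hx0 : x0 ∈ S) (hu : x0 + u ∈ S)
    (hM : g (x0 + u) ≤ M) (ht0 : 0 ≤ t) (ht1 : t ≤ 1) :
    g (x0 + t • u) ≤ g x0 + t * (M - g x0) := by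
  have hseg : (1 - t) • x0 + t • (x0 + u) = x0 + t • u := by module
  calc g (x0 + t • u) ≤ (1 - t) * g x0 + t * g (x0 + u) := by
        rw [← hseg]; exact hg.2 hx0 hu (by linarith) ht0 (by ring)
    _ ≤ (1 - t) * g x0 + t * M := by gcongr
    _ = g x0 + t * (M - g x0) := by ring

theorem ConvexOn.abs_sub_le_of_le (hg : ConvexOn ℝ S g) (hp : x0 + u ∈ S) (hm : x0 - u ∈ S)
    (hpM : g (x0 + u) ≤ M) (hmM : g (x0 - u) ≤ M) (ht0 : 0 ≤ t) (ht1 : t ≤ 1) :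
    |g (x0 + t • u) - g x0| ≤ t * (M - g x0) := by
  have hx0 : x0 ∈ S := by
    have hsum : (1 / 2 : ℝ) • (x0 + u) + (1 / 2 : ℝ) • (x0 - u) = x0 := by module
    have h := hg.1 hp hm one_half_pos.le one_half_pos.le (add_halves 1)
    rwa [hsum] at h
  rw [sub_eq_add_neg] at hm hmM
  have hupper := hg.le_add_smul_mul_sub hx0 hp hpM ht0 ht1
  have hupper' := hg.le_add_smul_mul_sub hx0 hm hmM ht0 ht1
  have hmid : g x0 ≤ (1 / 2) * g (x0 + t • u) + (1 / 2) * g (x0 + t • -u) := by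
    have hsum : (1 / 2 : ℝ) • (x0 + t • u) + (1 / 2 : ℝ) • (x0 + t • -u) = x0 := by module
    have h := hg.2 (hg.1.add_smul_mem hx0 hp ⟨ht0, ht1⟩) (hg.1.add_smul_mem hx0 hm ⟨ht0, ht1⟩)
      one_half_pos.le one_half_pos.le (add_halves 1)
    rwa [hsum] at h
  rw [abs_le]
  constructor <;> linarith

variable [TopologicalSpace V] [IsTopologicalAddGroup V] [ContinuousSMul ℝ V]

theorem ConvexOn.continuousAt_of_eventually_le (hg : ConvexOn ℝ S g) (hS : S ∈ 𝓝 x0)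
    (hM : ∀ᶠ x in 𝓝 x0, g x ≤ M) : ContinuousAt g x0 := by
  rw [ContinuousAt, Metric.tendsto_nhds]
  intro ε hε
  have hsmall : ∀ᶠ t in 𝓝 (0 : ℝ), t ≤ 1 ∧ t * (M - g x0) < ε := by
    have hlim : Tendsto (fun t : ℝ => t * (M - g x0)) (𝓝 0) (𝓝 0) := by
      simpa using (continuous_mul_const (M - g x0)).tendsto 0
    exact (eventually_le_nhds one_pos).and (hlim.eventually (eventually_lt_nhds hε))
  obtain ⟨t, ht0, ht1, htε⟩ := hsmall.exists_gt
  have hgood : ∀ᶠ y in 𝓝 x0, y ∈ S ∧ g y ≤ M := Eventually.and hS hM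
  have hplus : Tendsto (fun x => x0 + t⁻¹ • (x - x0)) (𝓝 x0) (𝓝 x0) :=
    Continuous.tendsto' (by fun_prop) x0 x0 (by simp)
  have hminus : Tendsto (fun x => x0 - t⁻¹ • (x - x0)) (𝓝 x0) (𝓝 x0) :=
    Continuous.tendsto' (by fun_prop) x0 x0 (by simp)
  filter_upwards [hplus.eventually hgood, hminus.eventually hgood] with x ⟨hp, hpM⟩ ⟨hm, hmM⟩
  have hx : x0 + t • t⁻¹ • (x - x0) = x := by
    rw [smul_inv_smul₀ ht0.ne']; abel
  rw [Real.dist_eq, ← hx]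
  exact (hg.abs_sub_le_of_le hp hm hpM hmM ht0.le ht1).trans_lt htε

end RealConvex

theorem convex_continuousAt_of_bddAbove_nhds_general
    {V : Type*} [AddCommGroup V] [Module ℝ V] [TopologicalSpace V]
    [IsTopologicalAddGroup V] [ContinuousSMul ℝ V]
    (f : V → EReal) (hne : ∀ x, f x ≠ ⊥)
    (hconv : ∀ x y : V, ∀ a b : ℝ, 0 ≤ a → 0 ≤ b → a + b = 1 →
      f (a • x + b • y) ≤ (a : EReal) * f x + (b : EReal) * f y)
    (x0 : V) (O : Set V) (hO : IsOpen O) (hx0 : x0 ∈ O)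
    (M : ℝ) (hM : ∀ x ∈ O, f x ≤ (M : EReal)) :
    ContinuousAt f x0 := by
  have hO' : O ∈ 𝓝 x0 := hO.mem_nhds hx0
  have hfin : ∀ x ∈ O, f x ≠ ⊤ := fun x hx => ne_top_of_le_ne_top (EReal.coe_ne_top M) (hM x hx)
  have hg : ContinuousAt (fun x => (f x).toReal) x0 :=
    (convexOn_toReal_of_ne_bot hne hconv).continuousAt_of_eventually_le
      (mem_of_superset hO' hfin)
      (eventually_of_mem hO' fun x hx => EReal.toReal_le_of_le_coe (hne x) (hM x hx))
  refine (continuous_coe_real_ereal.continuousAt.comp hg).congr ?_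
  filter_upwards [hO'] with x hx
  exact EReal.coe_toReal (hfin x hx) (hne x)

/-- A convex function `f : V → (-∞,∞]` on a locally convex
topological vector space which is bounded above on some open neighbourhood of a
point `x0` is continuous at `x0`. -/
theorem convex_continuousAt_of_bddAbove_nhds
    {V : Type*} [AddCommGroup V] [Module ℝ V] [TopologicalSpace V]
    [IsTopologicalAddGroup V] [ContinuousSMul ℝ V] [LocallyConvexSpace ℝ V]
    (f : V → EReal) (hne : ∀ x, f x ≠ ⊥)
    (hconv : ∀ x y : V, ∀ a b : ℝ, 0 ≤ a → 0 ≤ b → a + b = 1 →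
      f (a • x + b • y) ≤ (a : EReal) * f x + (b : EReal) * f y)
    (x0 : V) (O : Set V) (hO : IsOpen O) (hx0 : x0 ∈ O)
    (M : ℝ) (hM : ∀ x ∈ O, f x ≤ (M : EReal)) :
    ContinuousAt f x0 :=
  convex_continuousAt_of_bddAbove_nhds_general f hne hconv x0 O hO hx0 M hM
end

section
/- Let X and Y be real Gaussian random variables with X ~ N(μ_X, σ²) and Y ~ N(μ_Y, σ²) for the same variance σ² > 0 and means μ_X ≤ μ_Y. Then the conditional law of X given X ≥ 0 is dominated by the conditional law of Y given Y ≥ 0 in the usual stochastic order: P(X > a | X ≥ 0) ≤ P(Y > a | Y ≥ 0) for every a ∈ ℝ. -/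
open MeasureTheory ProbabilityTheory Set
open scoped ENNReal NNReal

/-!
Gaussians with a common variance are ordered in the likelihood ratio order: the ratio of the
densities of `N(mY, v)` and `N(mX, v)` is `x ↦ exp ((mY - mX) x / v)` up to a constant, which is
nondecreasing. The likelihood ratio order is preserved by conditioning on an upper set `U` such as
`[0, ∞)`, and it implies the usual stochastic order, i.e. `μ S ≤ ν S` for upper sets `S`.
-/

/-- `μ` is below `ν` in the likelihood ratio order; for measures with densities `f` and `g` this
says that `g / f` is nondecreasing. -/
def LikelihoodRatioLE {α : Type*} [MeasurableSpace α] [LE α] (μ ν : Measure α) : Prop :=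
  ∀ ⦃s t : Set α⦄, MeasurableSet s → MeasurableSet t → (∀ x ∈ s, ∀ y ∈ t, y ≤ x) →
    μ s * ν t ≤ ν s * μ t

section LikelihoodRatio

variable {α : Type*} [MeasurableSpace α]

theorem likelihoodRatioLE_withDensity [LE α] {ρ : Measure α} [SFinite ρ] {f g : α → ℝ≥0∞}
    (hf : Measurable f) (hg : Measurable g) (hfg : ∀ ⦃x y⦄, y ≤ x → f x * g y ≤ g x * f y) :
    LikelihoodRatioLE (ρ.withDensity f) (ρ.withDensity g) := by
  intro s t hs ht hst
  simp only [withDensity_apply _ hs, withDensity_apply _ ht, ← lintegral_indicator hs,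
    ← lintegral_indicator ht]
  rw [← lintegral_prod_mul ((hf.indicator hs).aemeasurable) ((hg.indicator ht).aemeasurable),
    ← lintegral_prod_mul ((hg.indicator hs).aemeasurable) ((hf.indicator ht).aemeasurable)]
  refine lintegral_mono fun z => ?_
  by_cases hz₁ : z.1 ∈ s
  · by_cases hz₂ : z.2 ∈ t
    · simpa only [indicator_of_mem hz₁, indicator_of_mem hz₂] using hfg (hst _ hz₁ _ hz₂)
    · simp [indicator_of_notMem hz₂]
  · simp [indicator_of_notMem hz₁]

theorem likelihoodRatioLE_dirac [PartialOrder α] {x y : α} (hxy : x ≤ y) :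
    LikelihoodRatioLE (Measure.dirac x) (Measure.dirac y) := by
  intro s t hs ht hst
  simp only [Measure.dirac_apply' _ hs, Measure.dirac_apply' _ ht]
  by_cases hxs : x ∈ s
  · by_cases hyt : y ∈ t
    · obtain rfl : x = y := le_antisymm hxy (hst x hxs y hyt)
      exact le_rfl
    · simp [indicator_of_notMem hyt]
  · simp [indicator_of_notMem hxs]

variable [LinearOrder α] {μ ν : Measure α}

theorem LikelihoodRatioLE.measure_inter_mul_le (h : LikelihoodRatioLE μ ν) {S U : Set α}
    (hS : IsUpperSet S) (hSm : MeasurableSet S) (hUm : MeasurableSet U) :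
    μ (S ∩ U) * ν U ≤ ν (S ∩ U) * μ U := by
  have split (ρ : Measure α) : ρ U = ρ (S ∩ U) + ρ (U \ S) := by
    rw [inter_comm, measure_inter_add_sdiff U hSm]
  have above : ∀ x ∈ S ∩ U, ∀ y ∈ U \ S, y ≤ x := fun x hx y hy =>
    le_of_not_ge fun hxy => hy.2 (hS hxy hx.1)
  calc μ (S ∩ U) * ν U
      = μ (S ∩ U) * ν (S ∩ U) + μ (S ∩ U) * ν (U \ S) := by rw [split ν, mul_add]
    _ ≤ ν (S ∩ U) * μ (S ∩ U) + ν (S ∩ U) * μ (U \ S) := by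
        gcongr ?_ + ?_
        · rw [mul_comm]
        · exact h (hSm.inter hUm) (hUm.diff hSm) above
    _ = ν (S ∩ U) * μ U := by rw [split μ, mul_add]

theorem LikelihoodRatioLE.measure_le [IsProbabilityMeasure μ] [IsProbabilityMeasure ν]
    (h : LikelihoodRatioLE μ ν) {S : Set α} (hS : IsUpperSet S) (hSm : MeasurableSet S) :
    μ S ≤ ν S := by
  simpa using h.measure_inter_mul_le hS hSm MeasurableSet.univ

theorem LikelihoodRatioLE.measure_inter_div_le [IsProbabilityMeasure μ] [IsProbabilityMeasure ν]
    (h : LikelihoodRatioLE μ ν) {S U : Set α} (hS : IsUpperSet S) (hU : IsUpperSet U)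
    (hSm : MeasurableSet S) (hUm : MeasurableSet U) :
    μ (S ∩ U) / μ U ≤ ν (S ∩ U) / ν U := by
  -- A `μ`-null `U` gives `0 / 0 = 0` on the left; otherwise `μ U ≤ ν U` keeps `ν U` nonzero.
  rcases eq_or_ne (μ U) 0 with hμ | hμ
  · simp [measure_mono_null inter_subset_right hμ]
  have hν : ν U ≠ 0 := (pos_iff_ne_zero.2 hμ |>.trans_le (h.measure_le hU hUm)).ne'
  calc μ (S ∩ U) / μ U
      = μ (S ∩ U) * ν U / (μ U * ν U) := (ENNReal.mul_div_mul_right _ _ hν (measure_ne_top _ _)).symm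
    _ ≤ ν (S ∩ U) * μ U / (μ U * ν U) :=
        ENNReal.div_le_div_right (h.measure_inter_mul_le hS hSm hUm) _
    _ = ν (S ∩ U) / ν U := by
        rw [mul_comm (μ U), ENNReal.mul_div_mul_right _ _ hμ (measure_ne_top _ _)]

end LikelihoodRatio

theorem gaussianPDFReal_mul_le {mX mY : ℝ} (v : ℝ≥0) (hm : mX ≤ mY) {x y : ℝ} (hxy : y ≤ x) :
    gaussianPDFReal mX v x * gaussianPDFReal mY v y ≤
      gaussianPDFReal mY v x * gaussianPDFReal mX v y := by
  have exponent : (x - mY) ^ 2 + (y - mX) ^ 2 ≤ (x - mX) ^ 2 + (y - mY) ^ 2 := by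
    nlinarith [mul_nonneg (sub_nonneg.2 hm) (sub_nonneg.2 hxy)]
  simp only [gaussianPDFReal]
  rw [mul_mul_mul_comm, mul_mul_mul_comm _ (Real.exp _), ← Real.exp_add, ← Real.exp_add]
  refine mul_le_mul_of_nonneg_left ?_ (by positivity)
  rw [Real.exp_le_exp, ← add_div, ← add_div]
  exact div_le_div_of_nonneg_right (by linarith) (by positivity)

theorem gaussianReal_likelihoodRatioLE {mX mY : ℝ} (v : ℝ≥0) (hm : mX ≤ mY) :
    LikelihoodRatioLE (gaussianReal mX v) (gaussianReal mY v) := by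
  rcases eq_or_ne v 0 with rfl | hv
  · simpa using likelihoodRatioLE_dirac hm
  rw [gaussianReal_of_var_ne_zero _ hv, gaussianReal_of_var_ne_zero _ hv]
  refine likelihoodRatioLE_withDensity (measurable_gaussianPDF _ _) (measurable_gaussianPDF _ _)
    fun x y hxy => ?_
  simp only [gaussianPDF, ← ENNReal.ofReal_mul (gaussianPDFReal_nonneg _ _ _)]
  exact ENNReal.ofReal_le_ofReal (gaussianPDFReal_mul_le v hm hxy)

theorem gaussian_conditional_stochastic_order_general
    {Ω : Type*} [MeasurableSpace Ω] (P : Measure Ω) [IsProbabilityMeasure P]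
    (X Y : Ω → ℝ) (mX mY : ℝ) (v : ℝ≥0) (hm : mX ≤ mY)
    (hX : P.map X = gaussianReal mX v)
    (hY : P.map Y = gaussianReal mY v)
    (a : ℝ) :
    P {ω | a < X ω ∧ 0 ≤ X ω} / P {ω | 0 ≤ X ω} ≤
      P {ω | a < Y ω ∧ 0 ≤ Y ω} / P {ω | 0 ≤ Y ω} := by
  have hXm : AEMeasurable X P := aemeasurable_of_map_neZero (by rw [hX]; infer_instance)
  have hYm : AEMeasurable Y P := aemeasurable_of_map_neZero (by rw [hY]; infer_instance)
  have key := (gaussianReal_likelihoodRatioLE v hm).measure_inter_div_le (isUpperSet_Ioi a)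
    (isUpperSet_Ici 0) measurableSet_Ioi measurableSet_Ici
  rw [← hX, ← hY] at key
  simp only [Measure.map_apply_of_aemeasurable hXm, Measure.map_apply_of_aemeasurable hYm,
    measurableSet_Ioi.inter measurableSet_Ici, measurableSet_Ici] at key
  exact key

/-- If `X ~ N(mX, v)` and `Y ~ N(mY, v)` with the same
positive variance `v` and `mX ≤ mY`, then the law of `X` conditioned on
`X ≥ 0` is dominated in the usual stochastic order by the law of `Y`
conditioned on `Y ≥ 0`. -/
theorem gaussian_conditional_stochastic_order
    {Ω : Type*} [MeasurableSpace Ω] (P : Measure Ω) [IsProbabilityMeasure P]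
    (X Y : Ω → ℝ) (mX mY : ℝ) (v : ℝ≥0) (hv : v ≠ 0) (hm : mX ≤ mY)
    (hX : P.map X = gaussianReal mX v)
    (hY : P.map Y = gaussianReal mY v)
    (a : ℝ) :
    P {ω | a < X ω ∧ 0 ≤ X ω} / P {ω | 0 ≤ X ω} ≤
      P {ω | a < Y ω ∧ 0 ≤ Y ω} / P {ω | 0 ≤ Y ω} :=
  gaussian_conditional_stochastic_order_general P X Y mX mY v hm hX hY a
end

section
/- Let g : ℝ → [0,∞) be upper semicontinuous with E[sup_{t∈[0,T]} g(X_t^x)] < ∞ for every x ∈ ℝ, and let f : ℝ → [0,∞) be measurable with v_f(θ,x) < ∞ for all (θ,x) ∈ [0,T]×ℝ. If f dominates g up to T, i.e. v_f(θ,x) ≥ g(x) for all θ ∈ [0,T] and x ∈ ℝ, then g(x) ≤ v_am(θ,x) ≤ v_f(θ,x) for all θ ∈ [0,T] and x ∈ ℝ; in particular g(x) ≤ inf_{θ∈[0,T]} v_f(θ,x) ≤ f(x) for all x ∈ ℝ. -/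
open MeasureTheory Filter Set
open scoped ENNReal NNReal

/-- European value of a payoff function `f`:
`v_f(θ,x) = e^{-rθ} ∫ N(x+r̂θ,σ²θ,y) f(y) dy` for `θ > 0`, `v_f(0,x) = f(x)`. -/
noncomputable def vEu (r σ : ℝ) (f : ℝ → ℝ) (θ x : ℝ) : ℝ :=
  if θ = 0 then f x
  else Real.exp (-(r * θ)) * ∫ y, gauss (x + (r - σ ^ 2 / 2) * θ) (σ ^ 2 * θ) y * f y

/-- The American value: supremum of `E[e^{-rτ} g(X_τ^x)]` over all stopping
times `τ` with values in `[0,θ]`, where `X_t^x = x + (r - σ²/2)t + σW_t`. -/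
noncomputable def vAm {Ω : Type*} {mΩ : MeasurableSpace Ω} (P : Measure Ω)
    (F : Filtration ℝ mΩ) (W : ℝ → Ω → ℝ) (r σ : ℝ) (g : ℝ → ℝ) (θ x : ℝ) : ℝ :=
  sSup {e : ℝ | ∃ τ : Ω → ℝ, IsStoppingTime F (fun ω => (τ ω : WithTop ℝ)) ∧ (∀ ω, τ ω ∈ Set.Icc 0 θ) ∧
    e = ∫ ω, Real.exp (-(r * τ ω)) *
          g (x + (r - σ ^ 2 / 2) * τ ω + σ * W (τ ω) ω) ∂P}


/-!
Stopping at once shows `g ≤ v_am`. For the upper bound write `Q_s f (y) = E[f(y + r̂ s + σ W_s)]`,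
so that `v_f(s, y) = e^{-rs} Q_s f (y)`. For a stopping time `τ ≤ θ`, domination gives
`e^{-rτ} g(X_τ) ≤ e^{-rθ} Q_{θ-τ} f (X_τ)`, and `t ↦ Q_{θ-t} f (X_t)` is a martingale by the Markov
property of `X`, so `E[Q_{θ-τ} f (X_τ)] ≤ Q_θ f (x)`. This optional-sampling bound is an equality
for finitely valued `τ` (sum the Markov property over the level sets of `τ`) and passes to general
`τ` by approximating it from above and applying Fatou's lemma, using that `(s, y) ↦ Q_s f (y)` is
continuous for `0 < s < θ` by dominated convergence. In particular every value `E[e^{-rτ} g(X_τ)]`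
is at most `v_f(θ, x)`, which also bounds the supremum defining `v_am`.
-/

open ProbabilityTheory
open scoped Topology

@[fun_prop]
lemma measurable_gauss (m s2 : ℝ) : Measurable (gauss m s2) := by
  unfold gauss; fun_prop

lemma gauss_nonneg (m s2 y : ℝ) : 0 ≤ gauss m s2 y := by
  unfold gauss; positivity

lemma gaussianPDFReal_toNNReal {s2 : ℝ} (hs2 : 0 ≤ s2) (m : ℝ) :
    gaussianPDFReal m s2.toNNReal = gauss m s2 := by
  ext z; rw [gaussianPDFReal, gauss, Real.coe_toNNReal _ hs2]

lemma continuousAt_gauss {m s2 : ℝ} (hs2 : 0 < s2) (z : ℝ) :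
    ContinuousAt (fun p : ℝ × ℝ => gauss p.1 p.2 z) (m, s2) := by
  unfold gauss
  fun_prop (disch := positivity)

lemma exists_gauss_le_mul_gauss {vlo vhi V M : ℝ} (h0 : 0 < vlo) (hle : vlo ≤ vhi)
    (hhi : vhi < V) :
    ∃ C : ℝ, 0 ≤ C ∧ ∀ μ v z, vlo ≤ v → v ≤ vhi → |μ - M| ≤ 1 →
      gauss μ v z ≤ C * gauss M V z := by
  have hvhi : 0 < vhi := h0.trans_le hle
  have hV : 0 < V := hvhi.trans hhi
  have hgap : 0 < V - vhi := sub_pos.2 hhi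
  set c := V / (2 * vhi * (V - vhi))
  refine ⟨(Real.sqrt (2 * Real.pi * vlo))⁻¹ * Real.sqrt (2 * Real.pi * V) * Real.exp c,
    by positivity, fun μ v z hv1 hv2 hμ => ?_⟩
  have hv : 0 < v := h0.trans_le hv1
  have hμ2 : (μ - M) ^ 2 ≤ 1 := by nlinarith [abs_le.1 hμ]
  have hexp : -((z - μ) ^ 2) / (2 * v) ≤ c + -((z - M) ^ 2) / (2 * V) := by
    have hvar : -((z - μ) ^ 2) / (2 * v) ≤ -((z - μ) ^ 2) / (2 * vhi) := by
      rw [neg_div, neg_div, neg_le_neg_iff]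
      exact div_le_div_of_nonneg_left (sq_nonneg _) (by positivity) (by linarith)
    -- completing the square in `z`, using `(μ - M)² ≤ 1`; this is where `c` comes from
    have hsq : (z - M) ^ 2 * (vhi * (V - vhi)) ≤ (z - μ) ^ 2 * (V * (V - vhi)) + V ^ 2 := by
      nlinarith [sq_nonneg ((z - M) * (V - vhi) - (μ - M) * V), mul_pos hV hgap,
        mul_pos hvhi hgap]
    have hmean : -((z - μ) ^ 2) / (2 * vhi) ≤ c + -((z - M) ^ 2) / (2 * V) := by
      rw [div_add_div _ _ (by positivity) (by positivity),
        div_le_div_iff₀ (by positivity) (by positivity)]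
      nlinarith
    exact hvar.trans hmean
  have hnorm : (Real.sqrt (2 * Real.pi * v))⁻¹ ≤ (Real.sqrt (2 * Real.pi * vlo))⁻¹ :=
    inv_anti₀ (by positivity) (Real.sqrt_le_sqrt (by nlinarith [Real.pi_pos]))
  have hsqrtV : Real.sqrt (2 * Real.pi * V) ≠ 0 := by positivity
  calc gauss μ v z
      ≤ (Real.sqrt (2 * Real.pi * vlo))⁻¹ * Real.exp (c + -((z - M) ^ 2) / (2 * V)) :=
        mul_le_mul hnorm (Real.exp_le_exp.2 hexp) (Real.exp_nonneg _) (by positivity)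
    _ = _ := by rw [gauss, Real.exp_add]; field_simp

/-- `gaussTransition b σ f s y = E[f(y + b s + σ W_s)]`, kept in `ℝ≥0∞` so that it needs no
integrability. -/
noncomputable def gaussTransition (b σ : ℝ) (f : ℝ → ℝ) (s y : ℝ) : ℝ≥0∞ :=
  ∫⁻ z, ENNReal.ofReal (f z) ∂gaussianReal (y + b * s) (σ ^ 2 * s).toNNReal

section gaussTransition

variable {b σ : ℝ} {f : ℝ → ℝ}

lemma gaussTransition_zero (hf : Measurable f) (y : ℝ) :
    gaussTransition b σ f 0 y = ENNReal.ofReal (f y) := by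
  simp only [gaussTransition, mul_zero, add_zero, Real.toNNReal_zero, gaussianReal_zero_var]
  exact lintegral_dirac' _ (by fun_prop)

lemma gaussTransition_of_pos (hσ : σ ≠ 0) (hf : Measurable f) {s : ℝ} (hs : 0 < s) (y : ℝ) :
    gaussTransition b σ f s y
      = ∫⁻ z, ENNReal.ofReal (gauss (y + b * s) (σ ^ 2 * s) z) * ENNReal.ofReal (f z) := by
  have hv : 0 < σ ^ 2 * s := by positivity
  rw [gaussTransition, gaussianReal_of_var_ne_zero _ (by simpa using hv),
    lintegral_withDensity_eq_lintegral_mul _ (measurable_gaussianPDF _ _) (by fun_prop)]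
  simp only [Pi.mul_apply, gaussianPDF, gaussianPDFReal_toNNReal hv.le]

lemma gaussTransition_eq_ofReal_integral (hσ : σ ≠ 0) (hf : Measurable f) (hf0 : ∀ z, 0 ≤ f z)
    {s y : ℝ} (hs : 0 < s) (hint : Integrable fun z => gauss (y + b * s) (σ ^ 2 * s) z * f z) :
    gaussTransition b σ f s y
      = ENNReal.ofReal (∫ z, gauss (y + b * s) (σ ^ 2 * s) z * f z) := by
  rw [gaussTransition_of_pos hσ hf hs, ofReal_integral_eq_lintegral_ofReal hint
    (ae_of_all _ fun z => mul_nonneg (gauss_nonneg _ _ _) (hf0 z))]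
  simp only [ENNReal.ofReal_mul (gauss_nonneg _ _ _)]

lemma measurable_gaussTransition (hf : Measurable f) (s : ℝ) :
    Measurable (gaussTransition b σ f s) := by
  by_cases hv : (σ ^ 2 * s).toNNReal = 0
  · unfold gaussTransition
    simp only [hv, gaussianReal_zero_var]
    simp_rw [lintegral_dirac' _ hf.ennreal_ofReal]
    fun_prop
  · have hjoint : Measurable fun p : ℝ × ℝ =>
        gaussianPDF (p.1 + b * s) (σ ^ 2 * s).toNNReal p.2 * ENNReal.ofReal (f p.2) := by
      simp only [gaussianPDF, gaussianPDFReal]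
      fun_prop
    unfold gaussTransition
    simp only [gaussianReal_of_var_ne_zero _ hv]
    simp_rw [lintegral_withDensity_eq_lintegral_mul _ (measurable_gaussianPDF _ _)
      hf.ennreal_ofReal]
    exact hjoint.lintegral_prod_right'

lemma lintegral_gaussianReal_eq_gaussTransition (hf : Measurable f) (s y : ℝ) :
    ∫⁻ u, ENNReal.ofReal (f (y + b * s + σ * u)) ∂gaussianReal 0 s.toNNReal
      = gaussTransition b σ f s y := by
  have hmap : (gaussianReal 0 s.toNNReal).map (fun u => y + b * s + σ * u)
      = gaussianReal (y + b * s) (σ ^ 2 * s).toNNReal := by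
    rw [show (fun u => y + b * s + σ * u) = (y + b * s + ·) ∘ (σ * ·) from rfl,
      ← Measure.map_map (by fun_prop) (by fun_prop), gaussianReal_map_const_mul,
      gaussianReal_map_const_add, Real.toNNReal_mul (sq_nonneg σ)]
    congr 1
    · ring
    · ext; simp [Real.coe_toNNReal _ (sq_nonneg σ)]
  rw [gaussTransition, ← hmap, lintegral_map (by fun_prop) (by fun_prop)]

/-- Dominated convergence against the Gaussian of the larger variance `σ² s'`. -/
lemma continuousAt_gaussTransition (hσ : σ ≠ 0) (hf : Measurable f) {s s' y : ℝ} (hs : 0 < s)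
    (hss' : s < s') (hint : Integrable fun z => gauss (y + b * s) (σ ^ 2 * s') z * f z) :
    ContinuousAt (fun p : ℝ × ℝ => gaussTransition b σ f p.1 p.2) (s, y) := by
  set M := y + b * s
  obtain ⟨shi, hs_shi, hshi_s'⟩ := exists_between hss'
  obtain ⟨C, hC0, hC⟩ := exists_gauss_le_mul_gauss (vlo := σ ^ 2 * (s / 2))
    (vhi := σ ^ 2 * shi) (V := σ ^ 2 * s') (M := M) (by positivity)
    (by gcongr; linarith) (by gcongr)
  have hmean : Tendsto (fun p : ℝ × ℝ => p.2 + b * p.1) (𝓝 (s, y)) (𝓝 M) :=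
    (continuous_snd.add (continuous_const.mul continuous_fst)).tendsto' _ _ rfl
  have hnear : ∀ᶠ p : ℝ × ℝ in 𝓝 (s, y), s / 2 ≤ p.1 ∧ p.1 ≤ shi ∧ |p.2 + b * p.1 - M| ≤ 1 := by
    have h1 : ∀ᶠ p : ℝ × ℝ in 𝓝 (s, y), p.1 ∈ Icc (s / 2) shi :=
      continuous_fst.continuousAt.preimage_mem_nhds (Icc_mem_nhds (by linarith) (by linarith))
    have h2 : ∀ᶠ p : ℝ × ℝ in 𝓝 (s, y), p.2 + b * p.1 ∈ Icc (M - 1) (M + 1) :=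
      hmean (Icc_mem_nhds (by linarith) (by linarith))
    filter_upwards [h1, h2] with p hp1 hp2
    exact ⟨hp1.1, hp1.2, abs_sub_le_iff.2 ⟨by linarith [hp2.2], by linarith [hp2.1]⟩⟩
  have hdensity : ∀ᶠ p : ℝ × ℝ in 𝓝 (s, y), gaussTransition b σ f p.1 p.2
      = ∫⁻ z, ENNReal.ofReal (gauss (p.2 + b * p.1) (σ ^ 2 * p.1) z) * ENNReal.ofReal (f z) := by
    filter_upwards [hnear] with p hp
    exact gaussTransition_of_pos hσ hf (by linarith [hp.1]) _
  refine Tendsto.congr' (EventuallyEq.symm hdensity) ?_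
  show Tendsto _ _ (𝓝 (gaussTransition b σ f s y))
  rw [gaussTransition_of_pos hσ hf hs]
  refine tendsto_lintegral_filter_of_dominated_convergence
    (fun z => ENNReal.ofReal (C * (gauss M (σ ^ 2 * s') z * f z)))
    (Eventually.of_forall fun p => by fun_prop) ?_
    ((hint.const_mul C).lintegral_lt_top).ne ?_
  · filter_upwards [hnear] with p hp
    refine ae_of_all _ fun z => ?_
    rw [← mul_assoc, ENNReal.ofReal_mul (mul_nonneg hC0 (gauss_nonneg _ _ _))]
    gcongr
    exact hC _ _ z (by gcongr; exact hp.1) (by gcongr; exact hp.2.1) hp.2.2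
  · refine ae_of_all _ fun z => ?_
    have hpair : Tendsto (fun p : ℝ × ℝ => (p.2 + b * p.1, σ ^ 2 * p.1)) (𝓝 (s, y))
        (𝓝 (M, σ ^ 2 * s)) :=
      hmean.prodMk_nhds ((continuous_const.mul continuous_fst).tendsto' _ _ rfl)
    refine ENNReal.Tendsto.mul_const ?_ (Or.inr ENNReal.ofReal_ne_top)
    exact ENNReal.continuous_ofReal.continuousAt.tendsto.comp
      ((continuousAt_gauss (by positivity) z).tendsto.comp hpair)

end gaussTransition

lemma vEu_nonneg (r σ : ℝ) {f : ℝ → ℝ} (hf0 : ∀ x, 0 ≤ f x) (θ x : ℝ) :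
    0 ≤ vEu r σ f θ x := by
  unfold vEu
  split_ifs
  · exact hf0 x
  · exact mul_nonneg (Real.exp_nonneg _)
      (integral_nonneg fun z => mul_nonneg (gauss_nonneg _ _ _) (hf0 z))

lemma ofReal_vEu {r σ : ℝ} (hσ : σ ≠ 0) {f : ℝ → ℝ} (hf : Measurable f) (hf0 : ∀ x, 0 ≤ f x)
    {s y : ℝ} (hs : 0 ≤ s)
    (hint : Integrable fun z => gauss (y + (r - σ ^ 2 / 2) * s) (σ ^ 2 * s) z * f z) :
    ENNReal.ofReal (vEu r σ f s y)
      = ENNReal.ofReal (Real.exp (-(r * s))) * gaussTransition (r - σ ^ 2 / 2) σ f s y := by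
  rcases hs.eq_or_lt with rfl | hs
  · simp [vEu, gaussTransition_zero hf]
  · rw [vEu, if_neg hs.ne', ENNReal.ofReal_mul (Real.exp_nonneg _),
      gaussTransition_eq_ofReal_integral hσ hf hf0 hs hint]

lemma ProbabilityTheory.IndepFun.lintegral_comp_eq_lintegral_lintegral_map {Ω α β : Type*}
    {mΩ : MeasurableSpace Ω} [MeasurableSpace α] [MeasurableSpace β] {μ : Measure Ω}
    [IsFiniteMeasure μ] {X : Ω → α} {Y : Ω → β} (hXY : IndepFun X Y μ) (hX : Measurable X)
    (hY : Measurable Y) {h : α × β → ℝ≥0∞} (hh : Measurable h) :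
    ∫⁻ ω, h (X ω, Y ω) ∂μ = ∫⁻ ω, ∫⁻ y, h (X ω, y) ∂(μ.map Y) ∂μ := by
  rw [← lintegral_map hh (hX.prodMk hY),
    (indepFun_iff_map_prod_eq_prod_map_map hX.aemeasurable hY.aemeasurable).1 hXY,
    lintegral_prod _ hh.aemeasurable, lintegral_map hh.lintegral_prod_right' hX]

structure IsBrownianMotion {Ω : Type*} {mΩ : MeasurableSpace Ω} (P : Measure Ω)
    (F : Filtration ℝ mΩ) (W : ℝ → Ω → ℝ) : Prop where
  ae_zero : ∀ᵐ ω ∂P, W 0 ω = 0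
  continuous : ∀ ω, Continuous fun t => W t ω
  adapted : Adapted F W
  map_sub : ∀ s t : ℝ, 0 ≤ s → s ≤ t →
    P.map (fun ω => W t ω - W s ω) = gaussianReal 0 (t - s).toNNReal
  indep_sub : ∀ s t : ℝ, 0 ≤ s → s ≤ t →
    Indep (MeasurableSpace.comap (fun ω => W t ω - W s ω) (borel ℝ)) (F s) P

/-- The paper's `X_t^x` is `arithmeticBM W x (r - σ²/2) σ t`. -/
def arithmeticBM {Ω : Type*} (W : ℝ → Ω → ℝ) (x b σ t : ℝ) (ω : Ω) : ℝ := x + b * t + σ * W t ω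

namespace IsBrownianMotion

variable {Ω : Type*} {mΩ : MeasurableSpace Ω} {P : Measure Ω} {F : Filtration ℝ mΩ}
  {W : ℝ → Ω → ℝ}

lemma measurable (hW : IsBrownianMotion P F W) (t : ℝ) : Measurable (W t) :=
  (hW.adapted t).mono (F.le t) le_rfl

lemma continuous_arithmeticBM (hW : IsBrownianMotion P F W) (x b σ : ℝ) (ω : Ω) :
    Continuous fun t => arithmeticBM W x b σ t ω := by
  have := hW.continuous ω
  unfold arithmeticBM
  fun_prop

lemma measurable_arithmeticBM (hW : IsBrownianMotion P F W) (x b σ t : ℝ) :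
    Measurable (arithmeticBM W x b σ t) :=
  ((hW.measurable t).const_mul σ).const_add _

lemma ae_arithmeticBM_zero (hW : IsBrownianMotion P F W) (x b σ : ℝ) :
    ∀ᵐ ω ∂P, arithmeticBM W x b σ 0 ω = x := by
  filter_upwards [hW.ae_zero] with ω hω
  simp [arithmeticBM, hω]

lemma indepFun_sub (hW : IsBrownianMotion P F W) {β : Type*} [MeasurableSpace β] {V : Ω → β}
    {t θ : ℝ} (ht : 0 ≤ t) (htθ : t ≤ θ) (hV : Measurable[F t] V) :
    IndepFun V (fun ω => W θ ω - W t ω) P :=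
  indep_of_indep_of_le_left (hW.indep_sub t θ ht htθ).symm hV.comap_le

lemma setLIntegral_ofReal_comp_eq (hW : IsBrownianMotion P F W) [IsFiniteMeasure P]
    {f : ℝ → ℝ} (hf : Measurable f) (x b σ : ℝ) {t θ : ℝ} (ht : 0 ≤ t) (htθ : t ≤ θ)
    {A : Set Ω} (hA : MeasurableSet[F t] A) :
    ∫⁻ ω in A, ENNReal.ofReal (f (arithmeticBM W x b σ θ ω)) ∂P
      = ∫⁻ ω in A, gaussTransition b σ f (θ - t) (arithmeticBM W x b σ t ω) ∂P := by
  -- `V` is `F t`-measurable, hence independent of the increment `W θ - W t`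
  set V : Ω → ℝ × ℝ≥0∞ := fun ω => (W t ω, A.indicator 1 ω)
  have hVF : Measurable[F t] V := (hW.adapted t).prodMk (measurable_const.indicator hA)
  have hV : Measurable V := hVF.mono (F.le t) le_rfl
  have hξ : Measurable fun ω => W θ ω - W t ω := (hW.measurable θ).sub (hW.measurable t)
  have hAΩ : MeasurableSet A := F.le t A hA
  set h : (ℝ × ℝ≥0∞) × ℝ → ℝ≥0∞ := fun q =>
    q.1.2 * ENNReal.ofReal (f (x + b * θ + σ * (q.1.1 + q.2)))
  have hh : Measurable h := by fun_prop
  calc ∫⁻ ω in A, ENNReal.ofReal (f (arithmeticBM W x b σ θ ω)) ∂P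
      = ∫⁻ ω, h (V ω, W θ ω - W t ω) ∂P := by
        rw [← lintegral_indicator hAΩ]
        refine lintegral_congr fun ω => ?_
        by_cases hω : ω ∈ A <;> simp [h, V, hω, arithmeticBM]
    _ = ∫⁻ ω, A.indicator 1 ω * gaussTransition b σ f (θ - t) (arithmeticBM W x b σ t ω) ∂P := by
        rw [(hW.indepFun_sub ht htθ hVF).lintegral_comp_eq_lintegral_lintegral_map hV hξ hh,
          hW.map_sub t θ ht htθ]
        refine lintegral_congr fun ω => ?_
        rw [lintegral_const_mul _ (by fun_prop), ← lintegral_gaussianReal_eq_gaussTransition hf]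
        congr 2 with u
        simp only [V, arithmeticBM]
        ring_nf
    _ = ∫⁻ ω in A, gaussTransition b σ f (θ - t) (arithmeticBM W x b σ t ω) ∂P := by
        rw [← lintegral_indicator hAΩ]
        refine lintegral_congr fun ω => ?_
        by_cases hω : ω ∈ A <;> simp [hω]

end IsBrownianMotion

section FiniteRange

variable {Ω α : Type*} [MeasurableSpace Ω] {τ : Ω → α}

lemma lintegral_eq_sum_setLIntegral_of_finite_range {μ : Measure Ω} (hτ : (range τ).Finite)
    (hmeas : ∀ a, MeasurableSet (τ ⁻¹' {a})) (G : α → Ω → ℝ≥0∞) :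
    ∫⁻ ω, G (τ ω) ω ∂μ = ∑ a ∈ hτ.toFinset, ∫⁻ ω in τ ⁻¹' {a}, G a ω ∂μ := by
  have hcover : ⋃ a ∈ hτ.toFinset, τ ⁻¹' {a} = univ := by
    ext ω; simp
  rw [← setLIntegral_univ, ← hcover,
    lintegral_biUnion_finset (pairwiseDisjoint_fiber τ _) fun a _ => hmeas a]
  exact Finset.sum_congr rfl fun a _ => setLIntegral_congr_fun (hmeas a) fun ω hω => by
    rw [mem_preimage, mem_singleton_iff] at hω
    rw [hω]

lemma measurable_comp_of_countable_range [MeasurableSpace α] [MeasurableSingletonClass α]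
    {β : Type*} [MeasurableSpace β] (hτ : (range τ).Countable)
    (hmeas : ∀ a, MeasurableSet (τ ⁻¹' {a})) {G : α → Ω → β} (hG : ∀ a, Measurable (G a)) :
    Measurable fun ω => G (τ ω) ω := by
  have := hτ.to_subtype
  have hτ' : Measurable (rangeFactorization τ) := measurable_to_countable' fun a => by
    convert hmeas a.1 using 1
    ext ω
    simp [rangeFactorization, Subtype.ext_iff]
  exact (measurable_from_prod_countable_left (f := fun p : Ω × range τ => G p.2 p.1)
    fun a => hG a).comp (measurable_id.prodMk hτ')

end FiniteRange

section StoppingTime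

variable {Ω : Type*} {mΩ : MeasurableSpace Ω} {F : Filtration ℝ mΩ} {τ : Ω → ℝ}

lemma MeasureTheory.IsStoppingTime.measurableSet_preimage_singleton_of_finite_range
    (hτ : IsStoppingTime F fun ω => (τ ω : WithTop ℝ)) (hfin : (range τ).Finite) (d : ℝ) :
    MeasurableSet[F d] (τ ⁻¹' {d}) := by
  have hcount : (range fun ω => (τ ω : WithTop ℝ)).Countable := by
    rw [show (fun ω => (τ ω : WithTop ℝ)) = (↑) ∘ τ from rfl, range_comp]
    exact (hfin.image _).countable
  have h := hτ.measurableSet_eq_of_countable_range hcount d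
  simp only [WithTop.coe_eq_coe] at h
  exact h

lemma MeasureTheory.IsStoppingTime.mul_ceil_div
    (hτ : IsStoppingTime F fun ω => (τ ω : WithTop ℝ)) {Δ : ℝ} (hΔ : 0 < Δ) :
    IsStoppingTime F fun ω => ((Δ * ⌈τ ω / Δ⌉ : ℝ) : WithTop ℝ) := by
  intro t
  have hfloor : Δ * ⌊t / Δ⌋ ≤ t := by
    rw [mul_comm, ← le_div_iff₀ hΔ]
    exact Int.floor_le _
  have hset : {ω | ((Δ * ⌈τ ω / Δ⌉ : ℝ) : WithTop ℝ) ≤ t}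
      = {ω | (τ ω : WithTop ℝ) ≤ ((Δ * ⌊t / Δ⌋ : ℝ) : WithTop ℝ)} := by
    ext ω
    simp only [mem_ofPred_eq, WithTop.coe_le_coe]
    rw [mul_comm Δ, ← le_div_iff₀ hΔ, ← Int.le_floor, Int.ceil_le, div_le_iff₀ hΔ, mul_comm _ Δ]
  rw [hset]
  exact F.mono hfloor _ (hτ _)

lemma MeasureTheory.IsStoppingTime.exists_finite_range_tendsto
    (hτ : IsStoppingTime F fun ω => (τ ω : WithTop ℝ)) {θ : ℝ} (hθ : 0 < θ)
    (hτθ : ∀ ω, τ ω ∈ Icc 0 θ) :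
    ∃ τn : ℕ → Ω → ℝ, (∀ n, IsStoppingTime F fun ω => (τn n ω : WithTop ℝ)) ∧
      (∀ n, (range (τn n)).Finite) ∧ (∀ n ω, τn n ω ∈ Icc (τ ω) θ) ∧
      (∀ n ω, τ ω = 0 → τn n ω = 0) ∧ ∀ ω, Tendsto (fun n => τn n ω) atTop (𝓝 (τ ω)) := by
  set Δ : ℕ → ℝ := fun n => θ / (n + 1)
  have hΔ n : 0 < Δ n := by positivity
  have hθΔ n : (n + 1) * Δ n = θ := by simp only [Δ]; field_simp
  have hceil_le n ω : ⌈τ ω / Δ n⌉ ≤ n + 1 := by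
    rw [Int.ceil_le, div_le_iff₀ (hΔ n)]
    push_cast
    calc τ ω ≤ θ := (hτθ ω).2
      _ = (n + 1) * Δ n := (hθΔ n).symm
  have hle n ω : τ ω ≤ Δ n * ⌈τ ω / Δ n⌉ := by
    rw [mul_comm, ← div_le_iff₀ (hΔ n)]
    exact Int.le_ceil _
  have hle_add n ω : Δ n * ⌈τ ω / Δ n⌉ ≤ τ ω + Δ n := by
    rw [mul_comm, ← le_div_iff₀ (hΔ n), add_div, div_self (hΔ n).ne']
    exact (Int.ceil_lt_add_one _).le
  refine ⟨fun n ω => Δ n * ⌈τ ω / Δ n⌉, fun n => hτ.mul_ceil_div (hΔ n),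
    fun n => ?_, fun n ω => ⟨hle n ω, ?_⟩, fun n ω h0 => by simp [h0], fun ω => ?_⟩
  · refine ((finite_Icc (0 : ℤ) (n + 1)).image fun k : ℤ => Δ n * k).subset ?_
    rintro _ ⟨ω, rfl⟩
    exact ⟨_, ⟨Int.ceil_nonneg (div_nonneg (hτθ ω).1 (hΔ n).le), hceil_le n ω⟩, rfl⟩
  · calc Δ n * ⌈τ ω / Δ n⌉ ≤ Δ n * (n + 1) := by
          gcongr
          exact_mod_cast hceil_le n ω
      _ = θ := by rw [mul_comm, hθΔ]
  · have hΔlim : Tendsto Δ atTop (𝓝 0) := by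
      simpa [Δ, div_eq_mul_one_div θ] using tendsto_one_div_add_atTop_nhds_zero_nat.const_mul θ
    refine tendsto_of_tendsto_of_tendsto_of_le_of_le tendsto_const_nhds ?_ (hle · ω)
      (hle_add · ω)
    simpa using tendsto_const_nhds.add hΔlim

end StoppingTime

namespace IsBrownianMotion

variable {Ω : Type*} {mΩ : MeasurableSpace Ω} {P : Measure Ω} {F : Filtration ℝ mΩ}
  {W : ℝ → Ω → ℝ} [IsProbabilityMeasure P] {f : ℝ → ℝ}

lemma lintegral_ofReal_comp_eq (hW : IsBrownianMotion P F W) (hf : Measurable f)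
    (x b σ : ℝ) {θ : ℝ} (hθ : 0 ≤ θ) :
    ∫⁻ ω, ENNReal.ofReal (f (arithmeticBM W x b σ θ ω)) ∂P = gaussTransition b σ f θ x := by
  have h := hW.setLIntegral_ofReal_comp_eq hf x b σ le_rfl hθ MeasurableSet.univ
  simp only [Measure.restrict_univ, sub_zero] at h
  rw [h, lintegral_congr_ae ((hW.ae_arithmeticBM_zero x b σ).mono fun ω hω => by rw [hω]),
    lintegral_const, measure_univ, mul_one]

lemma lintegral_gaussTransition_eq_of_finite_range (hW : IsBrownianMotion P F W)
    (hf : Measurable f) (x b σ : ℝ) {θ : ℝ} {τ : Ω → ℝ}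
    (hτ : IsStoppingTime F fun ω => (τ ω : WithTop ℝ)) (hfin : (range τ).Finite)
    (hτθ : ∀ ω, τ ω ∈ Icc 0 θ) :
    ∫⁻ ω, gaussTransition b σ f (θ - τ ω) (arithmeticBM W x b σ (τ ω) ω) ∂P
      = gaussTransition b σ f θ x := by
  have hlevel := hτ.measurableSet_preimage_singleton_of_finite_range hfin
  have hlevel' d : MeasurableSet (τ ⁻¹' {d}) := F.le d _ (hlevel d)
  have ⟨ω₀⟩ := nonempty_of_isProbabilityMeasure P
  calc ∫⁻ ω, gaussTransition b σ f (θ - τ ω) (arithmeticBM W x b σ (τ ω) ω) ∂P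
      = ∑ d ∈ hfin.toFinset, ∫⁻ ω in τ ⁻¹' {d},
          gaussTransition b σ f (θ - d) (arithmeticBM W x b σ d ω) ∂P :=
        lintegral_eq_sum_setLIntegral_of_finite_range hfin hlevel' fun d ω =>
          gaussTransition b σ f (θ - d) (arithmeticBM W x b σ d ω)
    _ = ∑ d ∈ hfin.toFinset,
          ∫⁻ ω in τ ⁻¹' {d}, ENNReal.ofReal (f (arithmeticBM W x b σ θ ω)) ∂P := by
        refine Finset.sum_congr rfl fun d hd => ?_
        obtain ⟨ω, rfl⟩ := hfin.mem_toFinset.1 hd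
        exact (hW.setLIntegral_ofReal_comp_eq hf x b σ (hτθ ω).1 (hτθ ω).2 (hlevel _)).symm
    _ = ∫⁻ ω, ENNReal.ofReal (f (arithmeticBM W x b σ θ ω)) ∂P :=
        (lintegral_eq_sum_setLIntegral_of_finite_range hfin hlevel' fun _ ω =>
          ENNReal.ofReal (f (arithmeticBM W x b σ θ ω))).symm
    _ = gaussTransition b σ f θ x :=
        hW.lintegral_ofReal_comp_eq hf x b σ ((hτθ ω₀).1.trans (hτθ ω₀).2)

lemma lintegral_gaussTransition_le (hW : IsBrownianMotion P F W) {σ : ℝ} (hσ : σ ≠ 0)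
    (hf : Measurable f) (x b : ℝ) {θ : ℝ}
    (hint : ∀ m, Integrable fun z => gauss m (σ ^ 2 * θ) z * f z) {τ : Ω → ℝ}
    (hτ : IsStoppingTime F fun ω => (τ ω : WithTop ℝ)) (hτθ : ∀ ω, τ ω ∈ Icc 0 θ) :
    ∫⁻ ω, gaussTransition b σ f (θ - τ ω) (arithmeticBM W x b σ (τ ω) ω) ∂P
      ≤ gaussTransition b σ f θ x := by
  have ⟨ω₀⟩ := nonempty_of_isProbabilityMeasure P
  rcases ((hτθ ω₀).1.trans (hτθ ω₀).2).eq_or_lt with rfl | hθ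
  · refine (hW.lintegral_gaussTransition_eq_of_finite_range hf x b σ hτ ?_ hτθ).le
    refine (finite_singleton 0).subset ?_
    rintro _ ⟨ω, rfl⟩
    exact le_antisymm (hτθ ω).2 (hτθ ω).1
  obtain ⟨τn, hτn, hfin, hτnτ, hτn0, hlim⟩ := hτ.exists_finite_range_tendsto hθ hτθ
  set G : ℝ → Ω → ℝ≥0∞ := fun t ω => gaussTransition b σ f (θ - t) (arithmeticBM W x b σ t ω)
  -- continuity of `gaussTransition` is only available for `0 < θ - τ < θ`; where `τ ∈ {0, θ}`
  -- the `τn` are constant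
  have hGlim ω : Tendsto (fun n => G (τn n ω) ω) atTop (𝓝 (G (τ ω) ω)) := by
    rcases (hτθ ω).1.eq_or_lt with h0 | h0
    · simp only [hτn0 _ _ h0.symm, ← h0]
      exact tendsto_const_nhds
    rcases (hτθ ω).2.eq_or_lt with hθ' | hθ'
    · have hτnθ n : τn n ω = θ := le_antisymm (hτnτ n ω).2 (hθ' ▸ (hτnτ n ω).1)
      simp only [hτnθ, hθ']
      exact tendsto_const_nhds
    · have hcont := continuousAt_gaussTransition (b := b) (y := arithmeticBM W x b σ (τ ω) ω)
        hσ hf (sub_pos.2 hθ') (sub_lt_self θ h0) (hint _)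
      exact hcont.tendsto.comp ((tendsto_const_nhds.sub (hlim ω)).prodMk_nhds
        (((hW.continuous_arithmeticBM x b σ ω).tendsto _).comp (hlim ω)))
  have hGmeas n : Measurable fun ω => G (τn n ω) ω :=
    measurable_comp_of_countable_range (hfin n).countable
      (fun d => F.le d _ ((hτn n).measurableSet_preimage_singleton_of_finite_range (hfin n) d))
      fun t => (measurable_gaussTransition hf _).comp (hW.measurable_arithmeticBM x b σ t)
  calc ∫⁻ ω, G (τ ω) ω ∂P = ∫⁻ ω, liminf (fun n => G (τn n ω) ω) atTop ∂P :=
        lintegral_congr fun ω => (hGlim ω).liminf_eq.symm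
    _ ≤ liminf (fun n => ∫⁻ ω, G (τn n ω) ω ∂P) atTop := lintegral_liminf_le hGmeas
    _ = gaussTransition b σ f θ x := by
        simp only [G, hW.lintegral_gaussTransition_eq_of_finite_range hf x b σ (hτn _) (hfin _)
          fun ω => ⟨(hτθ ω).1.trans (hτnτ _ ω).1, (hτnτ _ ω).2⟩]
        exact liminf_const _

variable {r σ : ℝ} {g : ℝ → ℝ}

lemma integral_exp_mul_le_vEu (hW : IsBrownianMotion P F W) (hσ : σ ≠ 0)
    (hg0 : ∀ y, 0 ≤ g y) (hf : Measurable f) (hf0 : ∀ y, 0 ≤ f y) {θ : ℝ}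
    (hfint : ∀ s ∈ Icc 0 θ, ∀ y : ℝ,
      Integrable fun z => gauss (y + (r - σ ^ 2 / 2) * s) (σ ^ 2 * s) z * f z)
    (hdom : ∀ s ∈ Icc 0 θ, ∀ y : ℝ, g y ≤ vEu r σ f s y) (x : ℝ) {τ : Ω → ℝ}
    (hτ : IsStoppingTime F fun ω => (τ ω : WithTop ℝ)) (hτθ : ∀ ω, τ ω ∈ Icc 0 θ) :
    ∫ ω, Real.exp (-(r * τ ω)) * g (arithmeticBM W x (r - σ ^ 2 / 2) σ (τ ω) ω) ∂P
      ≤ vEu r σ f θ x := by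
  set b := r - σ ^ 2 / 2
  set X : ℝ → Ω → ℝ := arithmeticBM W x b σ
  have ⟨ω₀⟩ := nonempty_of_isProbabilityMeasure P
  have hθ : 0 ≤ θ := (hτθ ω₀).1.trans (hτθ ω₀).2
  have hpoint ω : ENNReal.ofReal (Real.exp (-(r * τ ω)) * g (X (τ ω) ω))
      ≤ ENNReal.ofReal (Real.exp (-(r * θ))) * gaussTransition b σ f (θ - τ ω) (X (τ ω) ω) := by
    have hs : θ - τ ω ∈ Icc 0 θ := ⟨sub_nonneg.2 (hτθ ω).2, sub_le_self _ (hτθ ω).1⟩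
    calc ENNReal.ofReal (Real.exp (-(r * τ ω)) * g (X (τ ω) ω))
        ≤ ENNReal.ofReal (Real.exp (-(r * τ ω)) * vEu r σ f (θ - τ ω) (X (τ ω) ω)) := by
          gcongr
          exact hdom _ hs _
      _ = ENNReal.ofReal (Real.exp (-(r * τ ω))) * (ENNReal.ofReal (Real.exp (-(r * (θ - τ ω))))
            * gaussTransition b σ f (θ - τ ω) (X (τ ω) ω)) := by
          rw [ENNReal.ofReal_mul (Real.exp_nonneg _), ofReal_vEu hσ hf hf0 hs.1 (hfint _ hs _)]
      _ = _ := by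
          rw [← mul_assoc, ← ENNReal.ofReal_mul (Real.exp_nonneg _), ← Real.exp_add]
          ring_nf
  have hint m : Integrable fun z => gauss m (σ ^ 2 * θ) z * f z := by
    simpa using hfint θ ⟨hθ, le_rfl⟩ (m - b * θ)
  have hlint : ∫⁻ ω, ENNReal.ofReal (Real.exp (-(r * τ ω)) * g (X (τ ω) ω)) ∂P
      ≤ ENNReal.ofReal (vEu r σ f θ x) :=
    calc ∫⁻ ω, ENNReal.ofReal (Real.exp (-(r * τ ω)) * g (X (τ ω) ω)) ∂P
        ≤ ∫⁻ ω, ENNReal.ofReal (Real.exp (-(r * θ)))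
            * gaussTransition b σ f (θ - τ ω) (X (τ ω) ω) ∂P := lintegral_mono hpoint
      _ = ENNReal.ofReal (Real.exp (-(r * θ)))
            * ∫⁻ ω, gaussTransition b σ f (θ - τ ω) (X (τ ω) ω) ∂P :=
          lintegral_const_mul' _ _ ENNReal.ofReal_ne_top
      _ ≤ ENNReal.ofReal (Real.exp (-(r * θ))) * gaussTransition b σ f θ x := by
          gcongr
          exact hW.lintegral_gaussTransition_le hσ hf x b hint hτ hτθ
      _ = ENNReal.ofReal (vEu r σ f θ x) :=
          (ofReal_vEu hσ hf hf0 hθ (hfint θ ⟨hθ, le_rfl⟩ x)).symm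
  by_cases hφ : Integrable (fun ω => Real.exp (-(r * τ ω)) * g (X (τ ω) ω)) P
  · rw [← ENNReal.ofReal_le_ofReal_iff (vEu_nonneg r σ hf0 θ x),
      ofReal_integral_eq_lintegral_ofReal hφ
        (ae_of_all _ fun ω => mul_nonneg (Real.exp_nonneg _) (hg0 _))]
    exact hlint
  · rw [integral_undef hφ]
    exact vEu_nonneg r σ hf0 θ x

end IsBrownianMotion

section AmericanValue

variable {Ω : Type*} {mΩ : MeasurableSpace Ω} {P : Measure Ω} {F : Filtration ℝ mΩ}
  {W : ℝ → Ω → ℝ} {r σ : ℝ} {g : ℝ → ℝ} {θ x c : ℝ}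

lemma vAm_le (hθ : 0 ≤ θ)
    (h : ∀ τ : Ω → ℝ, IsStoppingTime F (fun ω => (τ ω : WithTop ℝ)) → (∀ ω, τ ω ∈ Icc 0 θ) →
      ∫ ω, Real.exp (-(r * τ ω)) * g (arithmeticBM W x (r - σ ^ 2 / 2) σ (τ ω) ω) ∂P ≤ c) :
    vAm P F W r σ g θ x ≤ c :=
  csSup_le ⟨_, fun _ => 0, isStoppingTime_const F 0, fun _ => ⟨le_rfl, hθ⟩, rfl⟩
    fun _ ⟨τ, hτ, hτθ, he⟩ => he ▸ h τ hτ hτθ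

lemma IsBrownianMotion.le_vAm (hW : IsBrownianMotion P F W) [IsProbabilityMeasure P]
    (hθ : 0 ≤ θ)
    (h : ∀ τ : Ω → ℝ, IsStoppingTime F (fun ω => (τ ω : WithTop ℝ)) → (∀ ω, τ ω ∈ Icc 0 θ) →
      ∫ ω, Real.exp (-(r * τ ω)) * g (arithmeticBM W x (r - σ ^ 2 / 2) σ (τ ω) ω) ∂P ≤ c) :
    g x ≤ vAm P F W r σ g θ x := by
  have hstop0 : ∫ ω, Real.exp (-(r * 0)) * g (arithmeticBM W x (r - σ ^ 2 / 2) σ 0 ω) ∂P = g x := by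
    rw [integral_congr_ae ((hW.ae_arithmeticBM_zero x _ σ).mono fun ω hω => by rw [hω])]
    simp
  exact le_csSup ⟨c, fun _ ⟨τ, hτ, hτθ, he⟩ => he ▸ h τ hτ hτθ⟩
    ⟨fun _ => 0, isStoppingTime_const F 0, fun _ => ⟨le_rfl, hθ⟩, hstop0.symm⟩

end AmericanValue

theorem dominating_European_bounds_American_general
    {Ω : Type*} {mΩ : MeasurableSpace Ω} (P : Measure Ω) [IsProbabilityMeasure P]
    (F : Filtration ℝ mΩ) (W : ℝ → Ω → ℝ)
    (hW0 : ∀ᵐ ω ∂P, W 0 ω = 0)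
    (hWcont : ∀ ω, Continuous fun t => W t ω)
    (hWadapted : Adapted F W)
    (hWgauss : ∀ s t : ℝ, 0 ≤ s → s ≤ t →
      P.map (fun ω => W t ω - W s ω) = ProbabilityTheory.gaussianReal 0 (Real.toNNReal (t - s)))
    (hWindep : ∀ s t : ℝ, 0 ≤ s → s ≤ t →
      ProbabilityTheory.Indep
        (MeasurableSpace.comap (fun ω => W t ω - W s ω) (borel ℝ)) (F s) P)
    (r σ T : ℝ) (hσ : 0 < σ) (hT : 0 < T)
    (g : ℝ → ℝ) (hg0 : ∀ x, 0 ≤ g x)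
    (f : ℝ → ℝ) (hfm : Measurable f) (hf0 : ∀ x, 0 ≤ f x)
    (hfint : ∀ θ ∈ Set.Icc (0 : ℝ) T, ∀ x : ℝ,
      Integrable (fun y => gauss (x + (r - σ ^ 2 / 2) * θ) (σ ^ 2 * θ) y * f y))
    (hdom : ∀ θ ∈ Set.Icc (0 : ℝ) T, ∀ x : ℝ, g x ≤ vEu r σ f θ x) :
    (∀ θ ∈ Set.Icc (0 : ℝ) T, ∀ x : ℝ,
      g x ≤ vAm P F W r σ g θ x ∧ vAm P F W r σ g θ x ≤ vEu r σ f θ x) ∧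
    (∀ x : ℝ, g x ≤ (⨅ θ : Set.Icc (0 : ℝ) T, vEu r σ f θ.1 x) ∧
      (⨅ θ : Set.Icc (0 : ℝ) T, vEu r σ f θ.1 x) ≤ f x) := by
  have hW : IsBrownianMotion P F W := ⟨hW0, hWcont, hWadapted, hWgauss, hWindep⟩
  have : Nonempty (Icc (0 : ℝ) T) := ⟨⟨0, le_rfl, hT.le⟩⟩
  refine ⟨fun θ hθ x => ?_, fun x => ⟨le_ciInf fun θ => hdom θ.1 θ.2 x, ?_⟩⟩
  · have hsub : Icc 0 θ ⊆ Icc 0 T := Icc_subset_Icc_right hθ.2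
    have hbound (τ : Ω → ℝ) (hτ : IsStoppingTime F fun ω => (τ ω : WithTop ℝ))
        (hτθ : ∀ ω, τ ω ∈ Icc 0 θ) :=
      hW.integral_exp_mul_le_vEu hσ.ne' hg0 hfm hf0 (fun s hs => hfint s (hsub hs))
        (fun s hs => hdom s (hsub hs)) x hτ hτθ
    exact ⟨hW.le_vAm hθ.1 hbound, vAm_le hθ.1 hbound⟩
  · calc ⨅ θ : Icc (0 : ℝ) T, vEu r σ f θ.1 x
        ≤ vEu r σ f 0 x := ciInf_le ⟨0, by rintro _ ⟨θ, rfl⟩; exact vEu_nonneg r σ hf0 θ.1 x⟩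
          (⟨0, le_rfl, hT.le⟩ : Icc (0 : ℝ) T)
      _ = f x := if_pos rfl

/-- If a European payoff `f` dominates `g` up to `T`, then
`g ≤ v_am ≤ v_f` on `[0,T] × ℝ`; in particular
`g(x) ≤ inf_{θ∈[0,T]} v_f(θ,x) ≤ f(x)` for every `x`. -/
theorem dominating_European_bounds_American
    {Ω : Type*} {mΩ : MeasurableSpace Ω} (P : Measure Ω) [IsProbabilityMeasure P]
    (F : Filtration ℝ mΩ) (W : ℝ → Ω → ℝ)
    (hW0 : ∀ᵐ ω ∂P, W 0 ω = 0)
    (hWcont : ∀ ω, Continuous fun t => W t ω)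
    (hWadapted : Adapted F W)
    (hWgauss : ∀ s t : ℝ, 0 ≤ s → s ≤ t →
      P.map (fun ω => W t ω - W s ω) = ProbabilityTheory.gaussianReal 0 (Real.toNNReal (t - s)))
    (hWindep : ∀ s t : ℝ, 0 ≤ s → s ≤ t →
      ProbabilityTheory.Indep
        (MeasurableSpace.comap (fun ω => W t ω - W s ω) (borel ℝ)) (F s) P)
    (r σ T : ℝ) (hr : 0 ≤ r) (hσ : 0 < σ) (hT : 0 < T)
    (g : ℝ → ℝ) (hgusc : UpperSemicontinuous g) (hg0 : ∀ x, 0 ≤ g x)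
    (hgint : ∀ x : ℝ, Integrable
      (fun ω => ⨆ t : Set.Icc (0 : ℝ) T, g (x + (r - σ ^ 2 / 2) * t.1 + σ * W t.1 ω)) P)
    (f : ℝ → ℝ) (hfm : Measurable f) (hf0 : ∀ x, 0 ≤ f x)
    (hfint : ∀ θ ∈ Set.Icc (0 : ℝ) T, ∀ x : ℝ,
      Integrable (fun y => gauss (x + (r - σ ^ 2 / 2) * θ) (σ ^ 2 * θ) y * f y))
    (hdom : ∀ θ ∈ Set.Icc (0 : ℝ) T, ∀ x : ℝ, g x ≤ vEu r σ f θ x) :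
    (∀ θ ∈ Set.Icc (0 : ℝ) T, ∀ x : ℝ,
      g x ≤ vAm P F W r σ g θ x ∧ vAm P F W r σ g θ x ≤ vEu r σ f θ x) ∧
    (∀ x : ℝ, g x ≤ (⨅ θ : Set.Icc (0 : ℝ) T, vEu r σ f θ.1 x) ∧
      (⨅ θ : Set.Icc (0 : ℝ) T, vEu r σ f θ.1 x) ≤ f x) :=
  dominating_European_bounds_American_general P F W hW0 hWcont hWadapted hWgauss hWindep r σ T hσ hT
    g hg0 f hfm hf0 hfint hdom
end
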